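/- arXiv:1703.09870 — 9 statements merged into one kernel-verified Lean document; each statement's English description precedes it below -/
import Mathlib

section
/- Let 2 ≤ k ≤ m and let A_1, ..., A_n be closed bounded intervals in ℝ such that among any m of them, some k have a common point. Then there exists a point contained in at least ⌈(k-1)·n/(m-1)⌉ of the intervals. -/
/-!
Order the intervals by left endpoint and colour them greedily. An interval meeting `I` and
starting no later than `I` contains the left endpoint of `I`, so if `D` is the maximal number of
intervals through a point, a free colour among `D` is always available: the intersection graph is
properly `D`-coloured. Two intervals of one colour are disjoint, so any `k` intervals drawn from
`k - 1` colour classes cannot share a point; by agreeability the union of the `k - 1` largest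
classes has at most `m - 1` members, while it has at least `(k - 1) n / D` of them.
-/

open Classical

open Finset

section TopElements
variable {α M : Type*} [LinearOrder M]

theorem Finset.exists_subset_card_eq_forall_le (f : α → M) {r : ℕ} {s : Finset α} (hr : r ≤ #s) :
    ∃ t ⊆ s, #t = r ∧ ∀ x ∈ s \ t, ∀ y ∈ t, f x ≤ f y := by
  induction r generalizing s with
  | zero => exact ⟨∅, empty_subset s, rfl, by simp⟩
  | succ r ih =>
    obtain ⟨y₀, hy₀, hmax⟩ := s.exists_max_image f (card_pos.1 (by omega))
    obtain ⟨t, hts, htr, hle⟩ := ih (s := s.erase y₀) (by rw [card_erase_of_mem hy₀]; omega)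
    have hy₀t : y₀ ∉ t := fun h => (mem_erase.1 (hts h)).1 rfl
    refine ⟨insert y₀ t, insert_subset hy₀ (hts.trans (erase_subset y₀ s)), by
      rw [card_insert_of_notMem hy₀t, htr], fun x hx y hy => ?_⟩
    obtain ⟨hxs, hxt⟩ := mem_sdiff.1 hx
    rcases mem_insert.1 hy with rfl | hy
    · exact hmax x hxs
    · exact hle x (mem_sdiff.2 ⟨mem_erase.2 ⟨fun h => hxt (h ▸ mem_insert_self x t), hxs⟩,
        fun h => hxt (mem_insert_of_mem h)⟩) y hy

theorem Finset.exists_subset_card_eq_nsmul_sum_le [AddCommMonoid M] [IsOrderedAddMonoid M]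
    (f : α → M) {r : ℕ} {s : Finset α} (hr : r ≤ #s) :
    ∃ t ⊆ s, #t = r ∧ r • ∑ x ∈ s, f x ≤ #s • ∑ x ∈ t, f x := by
  obtain ⟨t, hts, htr, hle⟩ := exists_subset_card_eq_forall_le f hr
  refine ⟨t, hts, htr, ?_⟩
  have hrest : r • ∑ x ∈ s \ t, f x ≤ #(s \ t) • ∑ y ∈ t, f y := calc
    r • ∑ x ∈ s \ t, f x = ∑ x ∈ s \ t, #t • f x := by rw [smul_sum, htr]
    _ ≤ ∑ _x ∈ s \ t, ∑ y ∈ t, f y := sum_le_sum fun x hx => card_nsmul_le_sum t f (f x) (hle x hx)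
    _ = #(s \ t) • ∑ y ∈ t, f y := sum_const _
  calc r • ∑ x ∈ s, f x = r • ∑ x ∈ s \ t, f x + r • ∑ x ∈ t, f x := by
        rw [← smul_add, sum_sdiff hts]
    _ ≤ #(s \ t) • ∑ y ∈ t, f y + #t • ∑ y ∈ t, f y := by rw [htr]; gcongr
    _ = #s • ∑ x ∈ t, f x := by rw [← add_smul, card_sdiff_add_card_eq_card hts]

end TopElements

section IntervalColoring
variable {ι κ : Type*} (a b : ι → ℝ)

noncomputable def approvers (s : Finset ι) (x : ℝ) : Finset ι :=
  s.filter fun i => x ∈ Set.Icc (a i) (b i)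

def IsIntervalColoring (s : Finset ι) (c : ι → κ) : Prop :=
  ∀ i ∈ s, ∀ j ∈ s, i ≠ j → (Set.Icc (a i) (b i) ∩ Set.Icc (a j) (b j)).Nonempty → c i ≠ c j

variable {a b}

theorem subset_approvers {s T : Finset ι} {x : ℝ} (hTs : T ⊆ s)
    (hx : x ∈ ⋂ i ∈ T, Set.Icc (a i) (b i)) : T ⊆ approvers a b s x :=
  fun i hi => mem_filter.2 ⟨hTs hi, Set.mem_iInter₂.1 hx i hi⟩

theorem IsIntervalColoring.injOn {s T : Finset ι} {c : ι → κ} (hc : IsIntervalColoring a b s c)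
    (hTs : T ⊆ s) (hT : (⋂ i ∈ T, Set.Icc (a i) (b i)).Nonempty) : Set.InjOn c T := by
  obtain ⟨x, hx⟩ := hT
  rw [Set.mem_iInter₂] at hx
  intro i hi j hj hcij
  by_contra hij
  exact hc i (hTs hi) j (hTs hj) hij ⟨x, hx i hi, hx j hj⟩ hcij

variable (a b)

theorem exists_forall_card_approvers_le (s : Finset ι) :
    ∃ x₀, ∀ x, #(approvers a b s x) ≤ #(approvers a b s x₀) := by
  have hbdd : BddAbove (Set.range fun x => #(approvers a b s x)) :=
    ⟨#s, Set.forall_mem_range.2 fun x => card_filter_le _ _⟩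
  obtain ⟨x₀, hx₀⟩ := Nat.sSup_mem (Set.range_nonempty _) hbdd
  exact ⟨x₀, fun x => (le_csSup hbdd ⟨x, rfl⟩).trans_eq hx₀.symm⟩

theorem card_filter_meet_lt {s : Finset ι} {i : ι} (hi : i ∉ s) (hmax : ∀ j ∈ s, a j ≤ a i)
    {D : ℕ} (hD : 0 < D) (hdepth : #(approvers a b (insert i s) (a i)) ≤ D) :
    #{j ∈ s | (Set.Icc (a i) (b i) ∩ Set.Icc (a j) (b j)).Nonempty} < D := by
  by_cases hab : a i ≤ b i
  · have hsub : insert i {j ∈ s | (Set.Icc (a i) (b i) ∩ Set.Icc (a j) (b j)).Nonempty} ⊆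
        approvers a b (insert i s) (a i) := by
      intro j hj
      simp only [approvers, mem_insert, mem_filter] at hj ⊢
      rcases hj with rfl | ⟨hj, y, ⟨hiy, -⟩, -, hyj⟩
      · exact ⟨Or.inl rfl, le_rfl, hab⟩
      · exact ⟨Or.inr hj, hmax j hj, hiy.trans hyj⟩
    have := card_le_card hsub
    rw [card_insert_of_notMem fun h => hi (mem_filter.1 h).1] at this
    omega
  · rw [filter_false_of_mem fun j _ ⟨y, ⟨hiy, hyi⟩, _⟩ => hab (hiy.trans hyi), card_empty]
    exact hD

theorem exists_isIntervalColoring {D : ℕ} (hD : 0 < D) (s : Finset ι)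
    (hdepth : ∀ x, #(approvers a b s x) ≤ D) : ∃ c : ι → Fin D, IsIntervalColoring a b s c := by
  induction s using Finset.induction_on_max_value a with
  | empty => exact ⟨fun _ => ⟨0, hD⟩, by simp [IsIntervalColoring]⟩
  | insert i s hi hmax ih =>
    obtain ⟨c, hc⟩ := ih fun x =>
      (card_le_card (filter_subset_filter _ (subset_insert i s))).trans (hdepth x)
    set N := {j ∈ s | (Set.Icc (a i) (b i) ∩ Set.Icc (a j) (b j)).Nonempty}
    obtain ⟨col, -, hcol⟩ := exists_mem_notMem_of_card_lt_card (s := N.image c) (t := univ)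
      (card_image_le.trans_lt (by simpa using card_filter_meet_lt a b hi hmax hD (hdepth (a i))))
    have hfree : ∀ j ∈ s, (Set.Icc (a i) (b i) ∩ Set.Icc (a j) (b j)).Nonempty → col ≠ c j :=
      fun j hj hij h => hcol (mem_image.2 ⟨j, mem_filter.2 ⟨hj, hij⟩, h.symm⟩)
    have hne : ∀ j ∈ s, j ≠ i := fun j hj h => hi (h ▸ hj)
    refine ⟨Function.update c i col, fun j hj l hl hjl hmeet => ?_⟩
    rcases mem_insert.1 hj with rfl | hj' <;> rcases mem_insert.1 hl with rfl | hl'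
    · exact absurd rfl hjl
    · simpa [hne l hl'] using hfree l hl' hmeet
    · simpa [hne j hj'] using (hfree j hj' (Set.inter_comm _ _ ▸ hmeet)).symm
    · simpa [hne j hj', hne l hl'] using hc j hj' l hl' hjl hmeet

end IntervalColoring

theorem ceil_sub_one_mul_div_sub_one_le {k m n D : ℕ} (hk : 1 ≤ k) (hm : 2 ≤ m)
    (h : (k - 1) * n ≤ D * (m - 1)) : ⌈((k : ℚ) - 1) * n / ((m : ℚ) - 1)⌉ ≤ D := by
  have hmq : (2 : ℚ) ≤ m := by exact_mod_cast hm
  rw [Int.ceil_le, div_le_iff₀ (by linarith)]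
  have hq : (((k - 1) * n : ℕ) : ℚ) ≤ ((D * (m - 1) : ℕ) : ℚ) := by exact_mod_cast h
  push_cast [Nat.cast_sub hk, Nat.cast_sub (by omega : 1 ≤ m)] at hq
  exact_mod_cast hq

/-- Agreeable Linear Society Theorem (Berg et al.): in a (k,m)-agreeable linear society of
`n` voters, some platform is approved by at least `⌈(k-1)·n/(m-1)⌉` voters. -/
theorem agreeable_linear_society (k m n : ℕ) (hk : 2 ≤ k) (hkm : k ≤ m) (hmn : m ≤ n)
    (a b : Fin n → ℝ)
    (h : ∀ T : Finset (Fin n), T.card = m → ∃ T' ⊆ T, T'.card = k ∧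
      (⋂ i ∈ T', Set.Icc (a i) (b i)).Nonempty) :
    ∃ x : ℝ, ⌈(((k : ℚ) - 1) * n) / ((m : ℚ) - 1)⌉ ≤
      ((Finset.univ.filter fun i : Fin n => x ∈ Set.Icc (a i) (b i)).card : ℤ) := by
  obtain ⟨x₀, hx₀⟩ := exists_forall_card_approvers_le a b univ
  set D := #(approvers a b univ x₀)
  have hkD : k ≤ D := by
    obtain ⟨T, -, hT⟩ := exists_subset_card_eq (s := (univ : Finset (Fin n))) (by simpa using hmn)
    obtain ⟨T', -, rfl, x, hx⟩ := h T hT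
    exact (card_le_card (subset_approvers (subset_univ T') hx)).trans (hx₀ x)
  obtain ⟨c, hc⟩ := exists_isIntervalColoring a b (by omega : 0 < D) univ hx₀
  obtain ⟨K, -, hK, hKsum⟩ := exists_subset_card_eq_nsmul_sum_le
    (fun col => #{i | c i = col}) (r := k - 1) (s := univ) (by simp; omega)
  have hU : #{i | c i ∈ K} ≤ m - 1 := by
    by_contra! hU
    obtain ⟨T, hTU, hT⟩ := exists_subset_card_eq (n := m) (by omega : m ≤ #{i | c i ∈ K})
    obtain ⟨T', hT'T, rfl, hT'⟩ := h T hT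
    have := card_le_card_of_injOn c (fun i hi => (mem_filter.1 (hTU (hT'T hi))).2)
      (hc.injOn (subset_univ T') hT')
    omega
  refine ⟨x₀, ceil_sub_one_mul_div_sub_one_le (by omega) (hk.trans hkm) ?_⟩
  calc (k - 1) * n = (k - 1) * ∑ col, #{i | c i = col} := by
        rw [sum_card_fiberwise_eq_card_filter, filter_true_of_mem fun i _ => mem_univ (c i),
          card_univ, Fintype.card_fin]
    _ ≤ D * ∑ col ∈ K, #{i | c i = col} := by simpa using hKsum
    _ = D * #{i | c i ∈ K} := by rw [sum_card_fiberwise_eq_card_filter]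
    _ ≤ D * (m - 1) := Nat.mul_le_mul_left D hU
end

section
/- Let S be a product society with voter approval sets C_i = A_i × B_i ⊆ X × Y for i = 1,...,n. Suppose α, β ∈ (0,1] are such that: every subfamily of the A_i of size at least m has a point common to at least an α-fraction of its members, and similarly every subfamily of the B_i of size at least m has a point common to at least a β-fraction of its members. If n ≥ m/min(α,β), then some point of X × Y lies in at least αβ·n of the sets C_i. -/
/-!
Pick `x` common to an `α`-fraction of all `n` sets `A i`. The voters approving `x` are at
least `α n ≥ m` many, so some `y` lies in a `β`-fraction of their `B i`, and `(x, y)` then lies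
in at least `α β n` of the products.
-/

open Classical

lemma le_mul_of_div_min_le {m n α β : ℝ} (hn : 0 ≤ n) (hα : 0 < α) (hβ : 0 < β)
    (h : m / min α β ≤ n) : m ≤ α * n := by
  rw [div_le_iff₀ (lt_min hα hβ)] at h
  nlinarith [mul_le_mul_of_nonneg_left (min_le_left α β) hn]

lemma Finset.filter_mem_prod_eq {ι X Y : Type*} (A : ι → Set X) (B : ι → Set Y) (s : Finset ι)
    (z : X × Y) :
    s.filter (fun i => z ∈ A i ×ˢ B i) =
      (s.filter fun i => z.1 ∈ A i).filter fun i => z.2 ∈ B i := by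
  rw [Finset.filter_filter]
  rfl

lemma mul_mul_card_le_card_filter_mem_prod {ι X Y : Type*} {A : ι → Set X} {B : ι → Set Y}
    {s : Finset ι} {α β : ℝ} (hβ : 0 ≤ β) {x : X} {y : Y}
    (hx : α * s.card ≤ (s.filter fun i => x ∈ A i).card)
    (hy : β * (s.filter fun i => x ∈ A i).card ≤
      ((s.filter fun i => x ∈ A i).filter fun i => y ∈ B i).card) :
    α * β * s.card ≤ (s.filter fun i => (x, y) ∈ A i ×ˢ B i).card := by
  rw [Finset.filter_mem_prod_eq]
  calc α * β * s.card = β * (α * s.card) := by ring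
    _ ≤ β * (s.filter fun i => x ∈ A i).card := mul_le_mul_of_nonneg_left hx hβ
    _ ≤ _ := hy

/-- General product society agreement bound: if every subfamily of the `A i` of size at
least `m` has a point common to an `α`-fraction of its members, likewise for the `B i`
with `β`, and `n ≥ m / min α β`, then some point of `X × Y` lies in at least `α·β·n`
of the products `A i ×ˢ B i`. -/
theorem product_society_bound {X Y : Type*} (n m : ℕ) (A : Fin n → Set X) (B : Fin n → Set Y)
    (α β : ℝ) (hα : α ∈ Set.Ioc (0 : ℝ) 1) (hβ : β ∈ Set.Ioc (0 : ℝ) 1)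
    (hA : ∀ T : Finset (Fin n), m ≤ T.card →
      ∃ x : X, α * T.card ≤ (T.filter fun i => x ∈ A i).card)
    (hB : ∀ T : Finset (Fin n), m ≤ T.card →
      ∃ y : Y, β * T.card ≤ (T.filter fun i => y ∈ B i).card)
    (hn : (m : ℝ) / min α β ≤ n) :
    ∃ z : X × Y, α * β * n ≤ (Finset.univ.filter fun i : Fin n => z ∈ A i ×ˢ B i).card := by
  have hmα : (m : ℝ) ≤ α * n := le_mul_of_div_min_le n.cast_nonneg hα.1 hβ.1 hn
  have hmn : m ≤ n := by
    exact_mod_cast hmα.trans (mul_le_of_le_one_left n.cast_nonneg hα.2)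
  obtain ⟨x, hx⟩ := hA Finset.univ (by rwa [Finset.card_fin])
  rw [Finset.card_fin] at hx
  obtain ⟨y, hy⟩ := hB (Finset.univ.filter fun i => x ∈ A i) (by exact_mod_cast hmα.trans hx)
  refine ⟨(x, y), ?_⟩
  have hxy := mul_mul_card_le_card_filter_mem_prod hβ.1.le (s := Finset.univ)
    (by rwa [Finset.card_fin]) hy
  rwa [Finset.card_fin] at hxy
end

section
/- Let 2 ≤ k ≤ m and let C_1, ..., C_n be axis-parallel closed rectangles in ℝ² (products of closed bounded intervals) such that among any m of them, some k share a common point. If n ≥ m(m-1)/(k-1), then there is a point of ℝ² contained in at least (k-1)²/(m-1)² · n of the rectangles. -/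
/-!
Let `S` be a family of closed intervals of a line in which every point lies in at most `w` members.
Colouring the intervals greedily, in order of left endpoints, uses at most `w` colours, and each
colour class consists of pairwise disjoint intervals. Some `k - 1` colour classes together contain
at least a `(k - 1) / w` share of `S`, and no point lies in `k` of their intervals; if `S` is
`(k, m)`-agreeable, this union therefore has fewer than `m` members. Taking for `w` the maximal
depth, some point lies in at least `(k - 1) / (m - 1) · |S|` intervals.

For rectangles, apply this to the first coordinates to obtain `x`. The bound on `n` makes the
rectangles whose first side contains `x` at least `m` in number, they again form an agreeable
family, and the one-dimensional bound for their second sides gives `y`; the point `(x, y)` lies in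
at least `((k - 1) / (m - 1))² · n` rectangles.
-/

open Classical

open Finset

def IsAgreeable {ι α : Type*} (k m : ℕ) (S : Finset ι) (s : ι → Set α) : Prop :=
  ∀ T ⊆ S, #T = m → ∃ T' ⊆ T, #T' = k ∧ (⋂ i ∈ T', s i).Nonempty

namespace IsAgreeable

variable {ι α β : Type*} {k m : ℕ} {S : Finset ι} {s : ι → Set α}

theorem subset (h : IsAgreeable k m S s) {A : Finset ι} (hA : A ⊆ S) : IsAgreeable k m A s :=
  fun T hT => h T (hT.trans hA)

theorem of_mapsTo (h : IsAgreeable k m S s) {t : ι → Set β} (f : α → β)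
    (hf : ∀ i, Set.MapsTo f (s i) (t i)) : IsAgreeable k m S t := by
  intro T hT hTm
  obtain ⟨T', hT'T, hT'k, x, hx⟩ := h T hT hTm
  exact ⟨T', hT'T, hT'k, f x,
    Set.mem_iInter₂.2 fun i hi => hf i (Set.mem_iInter₂.1 hx i hi)⟩

theorem card_lt_of_forall_card_filter_mem_lt [∀ i, DecidablePred (· ∈ s i)]
    (h : IsAgreeable k m S s) {U : Finset ι} (hU : U ⊆ S)
    (hdepth : ∀ x, #{i ∈ U | x ∈ s i} < k) : #U < m := by
  by_contra! hm
  obtain ⟨T, hTU, hTm⟩ := exists_subset_card_eq hm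
  obtain ⟨T', hT'T, hT'k, x, hx⟩ := h T (hTU.trans hU) hTm
  have hT' : T' ⊆ {i ∈ U | x ∈ s i} :=
    fun i hi => mem_filter.2 ⟨hTU (hT'T hi), Set.mem_iInter₂.1 hx i hi⟩
  exact (hdepth x).not_ge (hT'k ▸ card_le_card hT')

end IsAgreeable

theorem Finset.exists_subset_card_eq_mul_sum_le {α : Type*} (g : α → ℕ) {r : ℕ}
    {A : Finset α} (hr : r ≤ #A) :
    ∃ B ⊆ A, #B = r ∧ r * ∑ x ∈ A, g x ≤ #A * ∑ x ∈ B, g x := by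
  induction r generalizing A with
  | zero => exact ⟨∅, empty_subset A, rfl, by simp⟩
  | succ r ih =>
    -- add a maximiser of `g` to a good `r`-subset of the rest
    obtain ⟨b, hb, hmax⟩ := exists_max_image A g (card_pos.1 (by omega))
    have hA : #(A.erase b) + 1 = #A := card_erase_add_one hb
    obtain ⟨B, hBA, hBr, hB⟩ := ih (A := A.erase b) (by omega)
    have hbB : b ∉ B := fun h => (mem_erase.1 (hBA h)).1 rfl
    have hrest : ∑ x ∈ A.erase b, g x ≤ ∑ x ∈ B, g x + (#(A.erase b) - r) * g b := by
      rw [← sum_sdiff hBA, add_comm, ← hBr, ← card_sdiff_of_subset hBA]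
      gcongr
      exact sum_le_card_nsmul _ _ _ fun x hx => hmax x (mem_of_mem_erase (mem_sdiff.1 hx).1)
    refine ⟨insert b B, insert_subset hb (hBA.trans (erase_subset b A)),
      by rw [card_insert_of_notMem hbB, hBr], ?_⟩
    rw [← add_sum_erase A g hb, sum_insert hbB, ← hA]
    obtain ⟨d, hd⟩ := Nat.exists_eq_add_of_le (show r ≤ #(A.erase b) by omega)
    rw [hd, Nat.add_sub_cancel_left] at hrest
    rw [hd] at hB ⊢
    nlinarith

section Intervals

variable {ι α : Type*} [LinearOrder α] (l u : ι → α)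

theorem card_filter_mem_Icc_le_sup_left (S : Finset ι) (x : α) :
    #{i ∈ S | x ∈ Set.Icc (l i) (u i)} ≤
      S.sup fun j => #{i ∈ S | l j ∈ Set.Icc (l i) (u i)} := by
  rcases eq_empty_or_nonempty {i ∈ S | x ∈ Set.Icc (l i) (u i)} with hx | hx
  · rw [hx, card_empty]
    exact Nat.zero_le _
  obtain ⟨j, hj, hmax⟩ := exists_max_image _ l hx
  have hjx := (mem_filter.1 hj).2
  refine (card_le_card fun i hi => ?_).trans
    (le_sup (f := fun j => #{i ∈ S | l j ∈ Set.Icc (l i) (u i)}) (mem_filter.1 hj).1)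
  exact mem_filter.2 ⟨(mem_filter.1 hi).1, hmax i hi, hjx.1.trans (mem_filter.1 hi).2.2⟩

theorem exists_proper_coloring_Icc (S : Finset ι) {w : ℕ} (hw : 0 < w)
    (hdepth : ∀ x, #{i ∈ S | x ∈ Set.Icc (l i) (u i)} ≤ w) :
    ∃ f : ι → ℕ, (∀ i ∈ S, f i < w) ∧
      ∀ i ∈ S, ∀ j ∈ S, i ≠ j → f i = f j →
        Disjoint (Set.Icc (l i) (u i)) (Set.Icc (l j) (u j)) := by
  induction S using Finset.strongInduction with
  | H S ih =>
  rcases S.eq_empty_or_nonempty with rfl | hS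
  · exact ⟨0, by simp, by simp⟩
  obtain ⟨i₀, hi₀S, hmax⟩ := exists_max_image S l hS
  obtain ⟨f, hfw, hf⟩ := ih (S.erase i₀) (erase_ssubset hi₀S) fun x =>
    (card_le_card (filter_subset_filter _ (erase_subset _ _))).trans (hdepth x)
  set N := {j ∈ S.erase i₀ | ¬Disjoint (Set.Icc (l j) (u j)) (Set.Icc (l i₀) (u i₀))}
  -- the intervals meeting the one with the largest left endpoint all contain that endpoint
  have hN : #N < w := by
    by_cases hi₀ : l i₀ ≤ u i₀
    · have : insert i₀ N ⊆ {i ∈ S | l i₀ ∈ Set.Icc (l i) (u i)} := by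
        refine insert_subset (mem_filter.2 ⟨hi₀S, le_rfl, hi₀⟩) fun j hj => ?_
        obtain ⟨hjS, hj⟩ := mem_filter.1 hj
        obtain ⟨y, hyj, hyi₀⟩ := Set.not_disjoint_iff.1 hj
        exact mem_filter.2
          ⟨mem_of_mem_erase hjS, hmax j (mem_of_mem_erase hjS), hyi₀.1.trans hyj.2⟩
      have := card_le_card this
      rw [card_insert_of_notMem (by simp [N])] at this
      linarith [hdepth (l i₀)]
    · have : N = ∅ := filter_false_of_mem fun j _ => by
        simp [Set.Icc_eq_empty hi₀]
      simpa [this]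
  obtain ⟨c, hc, hcN⟩ := exists_mem_notMem_of_card_lt_card (s := N.image f) (t := range w)
    (by simpa using card_image_le.trans_lt hN)
  have hc_free : ∀ j ∈ S.erase i₀, f j = c →
      Disjoint (Set.Icc (l i₀) (u i₀)) (Set.Icc (l j) (u j)) := by
    intro j hj hjc
    by_contra hij
    exact hcN (mem_image.2 ⟨j, mem_filter.2 ⟨hj, fun h => hij h.symm⟩, hjc⟩)
  refine ⟨Function.update f i₀ c, fun i hi => ?_, fun i hi j hj hij hfij => ?_⟩
  · rcases eq_or_ne i i₀ with rfl | hi'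
    · simpa using hc
    · simpa [hi'] using hfw i (mem_erase.2 ⟨hi', hi⟩)
  · rcases eq_or_ne i i₀ with rfl | hi'
    · simp only [Function.update_self, Function.update_of_ne hij.symm] at hfij
      exact hc_free j (mem_erase.2 ⟨hij.symm, hj⟩) hfij.symm
    rcases eq_or_ne j i₀ with rfl | hj'
    · simp only [Function.update_self, Function.update_of_ne hij] at hfij
      exact (hc_free i (mem_erase.2 ⟨hij, hi⟩) hfij).symm
    · simp only [Function.update_of_ne hi', Function.update_of_ne hj'] at hfij
      exact hf i (mem_erase.2 ⟨hi', hi⟩) j (mem_erase.2 ⟨hj', hj⟩) hij hfij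

end Intervals

theorem IsAgreeable.exists_mul_card_le_mul_card_filter_mem_Icc {ι α : Type*} [LinearOrder α]
    {k m : ℕ} {S : Finset ι} {l u : ι → α} (hk : 0 < k)
    (h : IsAgreeable k m S fun i => Set.Icc (l i) (u i)) (hS : m ≤ #S) :
    ∃ x, (k - 1) * #S ≤ (m - 1) * #{i ∈ S | x ∈ Set.Icc (l i) (u i)} := by
  set w := S.sup fun j => #{i ∈ S | l j ∈ Set.Icc (l i) (u i)}
  have hdepth := card_filter_mem_Icc_le_sup_left l u S
  obtain ⟨x₀, hx₀⟩ : ∃ x, k ≤ #{i ∈ S | x ∈ Set.Icc (l i) (u i)} := by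
    by_contra! hlt
    exact (h.card_lt_of_forall_card_filter_mem_lt subset_rfl hlt).not_ge hS
  have hkw : k ≤ w := hx₀.trans (hdepth x₀)
  obtain ⟨f, hfw, hf⟩ := exists_proper_coloring_Icc l u S (hk.trans_le hkw) hdepth
  obtain ⟨B, hBw, hBk, hB⟩ := exists_subset_card_eq_mul_sum_le (fun c => #{i ∈ S | f i = c})
    (A := range w) (r := k - 1) (by simp; omega)
  set U := {i ∈ S | f i ∈ B}
  have hU : (k - 1) * #S ≤ w * #U := by
    have hSsum : #S = ∑ c ∈ range w, #{i ∈ S | f i = c} :=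
      card_eq_sum_card_fiberwise fun i hi => mem_range.2 (hfw i hi)
    have hUsum : #U = ∑ c ∈ B, #{i ∈ S | f i = c} := by
      rw [card_eq_sum_card_fiberwise (s := U) (t := B) fun i hi => (mem_filter.1 hi).2]
      refine sum_congr rfl fun c hc => ?_
      rw [filter_filter]
      exact congr_arg card
        (filter_congr fun i _ => ⟨And.right, fun hic => ⟨hic ▸ hc, hic⟩⟩)
    rw [card_range] at hB
    rw [hSsum, hUsum]
    exact hB
  -- a point meets each colour class at most once
  have hUdepth : ∀ x, #{i ∈ U | x ∈ Set.Icc (l i) (u i)} < k := by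
    intro x
    set V := {i ∈ U | x ∈ Set.Icc (l i) (u i)}
    have hinj : Set.InjOn f V := fun i hi j hj hfij => by
      by_contra hij
      exact Set.disjoint_left.1 (hf i (mem_filter.1 (mem_filter.1 hi).1).1 j
        (mem_filter.1 (mem_filter.1 hj).1).1 hij hfij) (mem_filter.1 hi).2 (mem_filter.1 hj).2
    have := card_le_card_of_injOn (s := V) (t := B) f
      (fun i hi => (mem_filter.1 (mem_filter.1 hi).1).2) hinj
    omega
  have hUm : #U < m := h.card_lt_of_forall_card_filter_mem_lt (filter_subset _ _) hUdepth
  obtain ⟨j, -, hjw⟩ := exists_mem_eq_sup S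
    ((card_pos.1 (hk.trans_le hx₀)).mono (filter_subset _ _))
    fun j => #{i ∈ S | l j ∈ Set.Icc (l i) (u i)}
  refine ⟨l j, ?_⟩
  rw [← hjw]
  calc (k - 1) * #S ≤ w * #U := hU
    _ ≤ w * (m - 1) := Nat.mul_le_mul_left w (by omega)
    _ = (m - 1) * w := Nat.mul_comm _ _

theorem IsAgreeable.exists_mul_card_le_mul_card_filter_mem_box {ι α β : Type*} [LinearOrder α]
    [LinearOrder β] {k m : ℕ} {S : Finset ι} {a b : ι → α} {c d : ι → β} (hk : 2 ≤ k)
    (hkm : k ≤ m) (h : IsAgreeable k m S fun i => Set.Icc (a i) (b i) ×ˢ Set.Icc (c i) (d i))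
    (hS : m * (m - 1) ≤ (k - 1) * #S) :
    ∃ z, (k - 1) ^ 2 * #S ≤
      (m - 1) ^ 2 * #{i ∈ S | z ∈ Set.Icc (a i) (b i) ×ˢ Set.Icc (c i) (d i)} := by
  have hm : 0 < m - 1 := by omega
  have hmS : m ≤ #S := Nat.le_of_mul_le_mul_right (hS.trans
    ((Nat.mul_le_mul_right _ (show k - 1 ≤ m - 1 by omega)).trans_eq (Nat.mul_comm _ _))) hm
  obtain ⟨x, hx⟩ := (h.of_mapsTo Prod.fst fun _ => Set.mapsTo_fst_prod)
    |>.exists_mul_card_le_mul_card_filter_mem_Icc (by omega) hmS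
  set A := {i ∈ S | x ∈ Set.Icc (a i) (b i)}
  have hmA : m ≤ #A := Nat.le_of_mul_le_mul_left ((Nat.mul_comm _ _).trans_le (hS.trans hx)) hm
  obtain ⟨y, hy⟩ := ((h.subset (filter_subset _ S)).of_mapsTo Prod.snd
    fun _ => Set.mapsTo_snd_prod).exists_mul_card_le_mul_card_filter_mem_Icc (by omega) hmA
  refine ⟨(x, y), ?_⟩
  have hxy : {i ∈ S | (x, y) ∈ Set.Icc (a i) (b i) ×ˢ Set.Icc (c i) (d i)} =
      {i ∈ A | y ∈ Set.Icc (c i) (d i)} := by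
    rw [filter_filter]
    rfl
  rw [hxy]
  calc (k - 1) ^ 2 * #S = (k - 1) * ((k - 1) * #S) := by ring
    _ ≤ (k - 1) * ((m - 1) * #A) := Nat.mul_le_mul_left _ hx
    _ = (m - 1) * ((k - 1) * #A) := by ring
    _ ≤ (m - 1) * ((m - 1) * #{i ∈ A | y ∈ Set.Icc (c i) (d i)}) := Nat.mul_le_mul_left _ hy
    _ = _ := by ring

/-- The 2-box case of the product society bound: in a (k,m)-agreeable 2-box society with
`n ≥ m(m-1)/(k-1)` voters, some point of ℝ² lies in at least `((k-1)/(m-1))²·n` rectangles. -/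
theorem two_box_product_bound (k m n : ℕ) (hk : 2 ≤ k) (hkm : k ≤ m)
    (a b c d : Fin n → ℝ)
    (h : ∀ T : Finset (Fin n), T.card = m → ∃ T' ⊆ T, T'.card = k ∧
      (⋂ i ∈ T', Set.Icc (a i) (b i) ×ˢ Set.Icc (c i) (d i)).Nonempty)
    (hn : ((m : ℚ) * (m - 1)) / ((k : ℚ) - 1) ≤ n) :
    ∃ z : ℝ × ℝ, (((k : ℚ) - 1) ^ 2 / ((m : ℚ) - 1) ^ 2) * n ≤
      ((Finset.univ.filter fun i : Fin n =>
        z ∈ Set.Icc (a i) (b i) ×ˢ Set.Icc (c i) (d i)).card : ℚ) := by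
  have hkq : (2 : ℚ) ≤ k := by exact_mod_cast hk
  have hkmq : (k : ℚ) ≤ m := by exact_mod_cast hkm
  have hn' : m * (m - 1) ≤ (k - 1) * #(univ : Finset (Fin n)) := by
    rw [div_le_iff₀ (by linarith)] at hn
    rw [card_univ, Fintype.card_fin]
    have : ((m * (m - 1) : ℕ) : ℚ) ≤ ((k - 1) * n : ℕ) := by
      push_cast [Nat.cast_sub (by omega : 1 ≤ m), Nat.cast_sub (by omega : 1 ≤ k)]
      linarith
    exact_mod_cast this
  obtain ⟨z, hz⟩ := IsAgreeable.exists_mul_card_le_mul_card_filter_mem_box hk hkm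
    (fun T _ => h T) hn'
  refine ⟨z, ?_⟩
  rw [card_univ, Fintype.card_fin] at hz
  rw [div_mul_eq_mul_div, div_le_iff₀ (pow_pos (by linarith) 2)]
  have := (Nat.cast_le (α := ℚ)).2 hz
  push_cast [Nat.cast_sub (by omega : 1 ≤ m), Nat.cast_sub (by omega : 1 ≤ k)] at this
  linarith
end

section
/- Let A_1, ..., A_n be closed arcs on the circle ℝ/ℤ that pairwise intersect. Then there exists a point of the circle contained in at least ⌈(n+1)/2⌉ of the arcs. -/
/-!
Of two intersecting closed arcs, one contains the left endpoint of the other. So the relation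
"the left endpoint of `A i` lies in `A j`" is total, and for a total relation on `n` points,
`#{j | R i j} + #{j | R j i} ≥ n + 1` for every `i` (the two sets cover everything and share `i`);
averaging over `i`, some left endpoint lies in at least `(n + 1) / 2` of the arcs.
-/

open Classical

/-- A closed arc on the circle ℝ/ℤ: the image of a closed interval. -/
def Arc (a b : ℝ) : Set (AddCircle (1 : ℝ)) :=
  (fun t : ℝ => (t : AddCircle (1 : ℝ))) '' Set.Icc a b

open Finset

section TotalRelation

variable {ι : Type*} [Fintype ι] (R : ι → ι → Prop) [DecidableRel R]

theorem add_one_le_card_filter_add_card_filter_swap (total : ∀ i j, R i j ∨ R j i) (i : ι) :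
    Fintype.card ι + 1 ≤ #{j | R i j} + #{j | R j i} := by
  set out : Finset ι := {j | R i j}
  set into : Finset ι := {j | R j i}
  have hunion : out ∪ into = univ := by
    ext j
    simpa [out, into] using total i j
  have hinter : i ∈ out ∩ into := by
    simpa [out, into] using total i i
  rw [← card_union_add_card_inter, hunion, card_univ]
  exact Nat.add_le_add_left (card_pos.mpr ⟨i, hinter⟩) _

theorem exists_add_one_le_two_mul_card_filter_of_total [Nonempty ι]
    (total : ∀ i j, R i j ∨ R j i) : ∃ i, Fintype.card ι + 1 ≤ 2 * #{j | R i j} := by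
  have hsum : ∑ _i : ι, (Fintype.card ι + 1) ≤ ∑ i, 2 * #{j | R i j} :=
    calc ∑ _i : ι, (Fintype.card ι + 1)
        ≤ ∑ i, (#{j | R i j} + #{j | R j i}) :=
          sum_le_sum fun i _ => add_one_le_card_filter_add_card_filter_swap R total i
      _ = ∑ i, 2 * #{j | R i j} := by
          simp only [card_filter, sum_add_distrib, two_mul]
          rw [sum_comm (f := fun i j => if R j i then 1 else 0)]
  obtain ⟨i, -, hi⟩ := exists_le_of_sum_le univ_nonempty hsum
  exact ⟨i, hi⟩

end TotalRelation

theorem AddCircle.coe_eq_coe_iff_exists_int {p x y : ℝ} :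
    (x : AddCircle p) = y ↔ ∃ k : ℤ, x = y + k * p := by
  rw [← sub_eq_zero, ← AddCircle.coe_sub, AddCircle.coe_eq_zero_iff]
  simp only [zsmul_eq_mul]
  exact exists_congr fun k => by constructor <;> intro hk <;> linarith

theorem coe_mem_arc_or_coe_mem_arc {a b a' b' : ℝ} (h : (Arc a b ∩ Arc a' b').Nonempty) :
    (a : AddCircle (1 : ℝ)) ∈ Arc a' b' ∨ (a' : AddCircle (1 : ℝ)) ∈ Arc a b := by
  obtain ⟨-, ⟨t, ht, rfl⟩, ⟨s, hs, hst⟩⟩ := h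
  obtain ⟨k, rfl⟩ := AddCircle.coe_eq_coe_iff_exists_int.mp hst.symm
  rw [mul_one] at ht
  rcases le_total a (a' + k) with hle | hle
  · right
    refine ⟨a' + k, ⟨hle, by linarith [hs.1, ht.2]⟩, ?_⟩
    exact AddCircle.coe_eq_coe_iff_exists_int.mpr ⟨k, by ring⟩
  · left
    refine ⟨a - k, ⟨by linarith, by linarith [ht.1, hs.2]⟩, ?_⟩
    exact AddCircle.coe_eq_coe_iff_exists_int.mpr ⟨-k, by push_cast; ring⟩

/-- Pairwise-intersecting closed arcs on the circle: some point lies in at least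
`⌈(n+1)/2⌉` of the `n` arcs, i.e. `n + 1 ≤ 2a`. -/
theorem pairwise_arcs_agreement (n : ℕ) (hn : 1 ≤ n) (a b : Fin n → ℝ)
    (h : ∀ i j : Fin n, (Arc (a i) (b i) ∩ Arc (a j) (b j)).Nonempty) :
    ∃ x : AddCircle (1 : ℝ),
      n + 1 ≤ 2 * (Finset.univ.filter fun i : Fin n => x ∈ Arc (a i) (b i)).card := by
  have : Nonempty (Fin n) := ⟨⟨0, hn⟩⟩
  obtain ⟨i, hi⟩ := exists_add_one_le_two_mul_card_filter_of_total
    (fun i j => (a i : AddCircle (1 : ℝ)) ∈ Arc (a j) (b j))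
    fun i j => coe_mem_arc_or_coe_mem_arc (h i j)
  exact ⟨a i, by simpa using hi⟩
end

section
/- Let m, k ≥ 2 be integers with k ≤ m ≤ 2k-2, and let G be a graph on n ≥ m vertices such that every subset of m vertices contains a clique of size k. Then G has a clique of size at least n - m + k. -/
/-!
Write `m = k + t`, so that `2t + 2 ≤ m`. Let `Q` be a maximum clique and suppose `t + 1` vertices
`C` lie outside it. A clique `A ⊆ C` could replace its non-neighbours in `Q`, so it has at least
`|A|` of them: Hall's condition holds for the cliques inside `C`, matching each vertex to a
non-neighbour in `Q`. Let `R ⊆ Q` be the image of a maximum matching of a subset of `C` in this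
sense; by augmentation, `R` contains at least `|A|` non-neighbours of every clique `A ⊆ C`.
An `m`-set `S ⊇ C ∪ R` (it exists as `|C ∪ R| ≤ 2t + 2`) contains a `k`-clique `K`; the
non-neighbours in `R` of `K ∩ C` lie outside `K ∪ C`, so `|K| + |C| ≤ |S| = k + t`, which is absurd.
-/

open Finset

section Matching

variable {ι α : Type*} (nb : ι → Finset α)

def MatchesInto (A : Finset ι) (f : ι → α) : Prop :=
  Set.InjOn f A ∧ ∀ a ∈ A, f a ∈ nb a

variable {nb}

theorem exists_maximum_matchesInto [Nonempty α] (C : Finset ι) :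
    ∃ M ⊆ C, ∃ f, MatchesInto nb M f ∧ ∀ B ⊆ C, ∀ g, MatchesInto nb B g → #B ≤ #M := by
  classical
  have hne : {A ∈ C.powerset | ∃ f, MatchesInto nb A f}.Nonempty :=
    ⟨∅, by simpa using ⟨fun _ => Classical.arbitrary α, by simp [MatchesInto]⟩⟩
  obtain ⟨M, hM, hmax⟩ := exists_max_image _ card hne
  obtain ⟨hMC, f, hf⟩ := mem_filter.1 hM
  rw [mem_powerset] at hMC
  exact ⟨M, hMC, f, hf, fun B hBC g hg => hmax B (by simpa using ⟨hBC, g, hg⟩)⟩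

variable [DecidableEq α]

theorem exists_matchesInto_of_hall [Nonempty α] {A : Finset ι}
    (hall : ∀ s ⊆ A, #s ≤ #(s.biUnion nb)) : ∃ f, MatchesInto nb A f := by
  classical
  obtain ⟨f, hf_inj, hf⟩ := (all_card_le_biUnion_card_iff_existsInjective'
    fun a : A => nb a).1 fun s : Finset A => by
      simpa [card_image_of_injective s Subtype.val_injective, image_biUnion]
        using hall (s.image Subtype.val)
          fun _ hx => by obtain ⟨a, -, rfl⟩ := mem_image.1 hx; exact a.2
  refine ⟨fun a => if ha : a ∈ A then f ⟨a, ha⟩ else Classical.arbitrary α, ?_, ?_⟩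
  · intro a ha b hb hab
    rw [mem_coe] at ha hb
    simp only [dif_pos ha, dif_pos hb] at hab
    exact congrArg Subtype.val (hf_inj hab)
  · intro a ha
    simpa [dif_pos ha] using hf ⟨a, ha⟩

/-- `A` together with the elements of `M` matched outside the neighbourhood of `A` is matchable
(by `g` on `A` and `f` on the rest), so maximality of `M` bounds it. -/
theorem card_le_card_image_inter_biUnion {C M A : Finset ι} {f g : ι → α}
    (hMC : M ⊆ C) (hf : MatchesInto nb M f)
    (hmax : ∀ B ⊆ C, ∀ h, MatchesInto nb B h → #B ≤ #M)
    (hAC : A ⊆ C) (hg : MatchesInto nb A g) :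
    #A ≤ #(M.image f ∩ A.biUnion nb) := by
  classical
  set N := A.biUnion nb
  set M' := {x ∈ M | f x ∉ N}
  have hgN : ∀ a ∈ A, g a ∈ N := fun a ha => mem_biUnion.2 ⟨a, ha, hg.2 a ha⟩
  have hM'M : M' ⊆ M := filter_subset _ _
  have hdisj : Disjoint A M' := disjoint_left.2 fun a ha ha' =>
    (mem_filter.1 ha').2 (mem_biUnion.2 ⟨a, ha, hf.2 a (hM'M ha')⟩)
  have hB : MatchesInto nb (A ∪ M') (A.piecewise g f) := by
    refine ⟨?_, fun x hx => ?_⟩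
    · rw [coe_union, Set.injOn_union (disjoint_coe.2 hdisj)]
      refine ⟨hg.1.congr fun a ha => (piecewise_eq_of_mem _ _ _ ha).symm,
        (hf.1.mono (coe_subset.2 hM'M)).congr fun x hx =>
          (piecewise_eq_of_notMem _ _ _ (disjoint_right.1 hdisj hx)).symm,
        fun x hx y hy hxy => (mem_filter.1 hy).2 ?_⟩
      rw [piecewise_eq_of_mem _ _ _ hx,
        piecewise_eq_of_notMem _ _ _ (disjoint_right.1 hdisj hy)] at hxy
      exact hxy ▸ hgN x hx
    · rcases mem_union.1 hx with hx | hx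
      · rw [piecewise_eq_of_mem _ _ _ hx]; exact hg.2 x hx
      · rw [piecewise_eq_of_notMem _ _ _ (disjoint_right.1 hdisj hx)]; exact hf.2 x (hM'M hx)
  have hcard := hmax _ (union_subset hAC (hM'M.trans hMC)) _ hB
  rw [card_union_of_disjoint hdisj] at hcard
  have hsplit : #{x ∈ M | f x ∈ N} + #M' = #M := card_filter_add_card_filter_not _
  have hmatched : #{x ∈ M | f x ∈ N} ≤ #(M.image f ∩ N) :=
    card_le_card_of_injOn f (fun x hx => by
      have := mem_filter.1 hx; exact mem_inter.2 ⟨mem_image_of_mem f this.1, this.2⟩)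
      (hf.1.mono (coe_subset.2 (filter_subset _ _)))
  omega

theorem exists_card_le_card_inter_biUnion_of_hall (C : Finset ι) :
    ∃ R ⊆ C.biUnion nb, #R ≤ #C ∧
      ∀ A ⊆ C, (∀ s ⊆ A, #s ≤ #(s.biUnion nb)) → #A ≤ #(R ∩ A.biUnion nb) := by
  rcases isEmpty_or_nonempty α with hα | hα
  · refine ⟨∅, empty_subset _, by simp, fun A _ hall => ?_⟩
    simpa [eq_empty_of_isEmpty (A.biUnion nb)] using hall A subset_rfl
  obtain ⟨M, hMC, f, hf, hmax⟩ := exists_maximum_matchesInto (nb := nb) C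
  refine ⟨M.image f, image_subset_iff.2 fun a ha => mem_biUnion.2 ⟨a, hMC ha, hf.2 a ha⟩,
    card_image_le.trans (card_le_card hMC), fun A hAC hall => ?_⟩
  obtain ⟨g, hg⟩ := exists_matchesInto_of_hall hall
  exact card_le_card_image_inter_biUnion hMC hf hmax hAC hg

end Matching

namespace SimpleGraph

variable {V : Type*} (G : SimpleGraph V)

def nonAdjFinset [DecidableRel G.Adj] (Q : Finset V) (a : V) : Finset V := {q ∈ Q | ¬ G.Adj a q}

section

variable {G} [DecidableRel G.Adj] [DecidableEq V]

theorem isClique_sdiff_biUnion_nonAdjFinset_union {Q A : Finset V}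
    (hQ : G.IsClique (Q : Set V)) (hA : G.IsClique (A : Set V)) :
    G.IsClique ((Q \ A.biUnion (G.nonAdjFinset Q) ∪ A : Finset V) : Set V) := by
  intro x hx y hy hxy
  simp only [coe_union, coe_sdiff, Set.mem_union, Set.mem_sdiff, mem_coe, mem_biUnion,
    nonAdjFinset, mem_filter, not_exists, not_and, not_not] at hx hy
  rcases hx with ⟨hxQ, hxN⟩ | hxA <;> rcases hy with ⟨hyQ, hyN⟩ | hyA
  · exact hQ hxQ hyQ hxy
  · exact G.adj_symm (hxN y hyA hxQ)
  · exact hyN x hxA hyQ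
  · exact hA hxA hyA hxy

theorem card_le_card_biUnion_nonAdjFinset {U Q A : Finset V} (hQU : Q ⊆ U)
    (hQ : G.IsClique (Q : Set V)) (hmax : ∀ P ⊆ U, G.IsClique (P : Set V) → #P ≤ #Q)
    (hAU : A ⊆ U) (hAQ : Disjoint A Q) (hA : G.IsClique (A : Set V)) :
    #A ≤ #(A.biUnion (G.nonAdjFinset Q)) := by
  have hNQ : A.biUnion (G.nonAdjFinset Q) ⊆ Q := biUnion_subset.2 fun _ _ => filter_subset _ _
  have hle := hmax _ (union_subset (sdiff_subset.trans hQU) hAU)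
    (isClique_sdiff_biUnion_nonAdjFinset_union hQ hA)
  rw [card_union_of_disjoint (disjoint_of_subset_left sdiff_subset hAQ.symm),
    card_sdiff_of_subset hNQ] at hle
  have := card_le_card hNQ
  omega

theorem disjoint_biUnion_nonAdjFinset {Q A K : Finset V} (hK : G.IsClique (K : Set V))
    (hAK : A ⊆ K) (hAQ : Disjoint A Q) : Disjoint (A.biUnion (G.nonAdjFinset Q)) K := by
  refine Finset.disjoint_left.2 fun y hy hyK => ?_
  obtain ⟨a, ha, hy⟩ := mem_biUnion.1 hy
  rw [nonAdjFinset, mem_filter] at hy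
  exact hy.2 (hK (hAK ha) hyK fun hay => Finset.disjoint_left.1 hAQ ha (hay ▸ hy.1))

theorem exists_card_eq_forall_isClique_card_lt {k t : ℕ} (hkt : t + 2 ≤ k) {Q C : Finset V}
    (hQ : G.IsClique (Q : Set V)) (hCQ : Disjoint C Q) (hC : #C = t + 1)
    (hQC : k + t ≤ #(Q ∪ C)) (hmax : ∀ P ⊆ Q ∪ C, G.IsClique (P : Set V) → #P ≤ #Q) :
    ∃ S ⊆ Q ∪ C, #S = k + t ∧ ∀ K ⊆ S, G.IsClique (K : Set V) → #K < k := by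
  obtain ⟨R, hR, hRC, hRhit⟩ :=
    exists_card_le_card_inter_biUnion_of_hall (nb := G.nonAdjFinset Q) C
  have hRQ : R ⊆ Q := hR.trans (biUnion_subset.2 fun _ _ => filter_subset _ _)
  obtain ⟨S, hCRS, hSU, hS⟩ := exists_subsuperset_card_eq
    (union_subset subset_union_right (hRQ.trans subset_union_left))
    (by have := card_union_le C R; omega) hQC
  refine ⟨S, hSU, hS, fun K hKS hK => ?_⟩
  set A := C ∩ K
  have hAK : A ⊆ K := inter_subset_right
  have hAQ : Disjoint A Q := disjoint_of_subset_left inter_subset_left hCQ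
  have hY := hRhit A inter_subset_left fun s hs =>
    card_le_card_biUnion_nonAdjFinset subset_union_left hQ hmax
      ((hs.trans inter_subset_left).trans subset_union_right) (disjoint_of_subset_left hs hAQ)
      (hK.subset (coe_subset.2 (hs.trans hAK)))
  set Y := R ∩ A.biUnion (G.nonAdjFinset Q)
  have hYKC : Disjoint Y (K ∪ C) := disjoint_union_right.2
    ⟨disjoint_of_subset_left inter_subset_right (disjoint_biUnion_nonAdjFinset hK hAK hAQ),
      disjoint_of_subset_left (inter_subset_left.trans hRQ) hCQ.symm⟩
  have hKCY := card_le_card (union_subset (union_subset hKS (subset_union_left.trans hCRS))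
    (inter_subset_left.trans (subset_union_right.trans hCRS)) : K ∪ C ∪ Y ⊆ S)
  rw [card_union_of_disjoint hYKC.symm] at hKCY
  have hKC : #(K ∪ C) + #A = #K + #C := by rw [← card_union_add_card_inter K C, inter_comm]
  omega

end

theorem exists_isClique_card_ge_of_forall_card_eq [Fintype V] {k t : ℕ} (hkt : t + 2 ≤ k)
    (hV : k + t ≤ Fintype.card V)
    (h : ∀ S : Finset V, #S = k + t → ∃ T ⊆ S, #T = k ∧ G.IsClique (T : Set V)) :
    ∃ Q : Finset V, Fintype.card V - t ≤ #Q ∧ G.IsClique (Q : Set V) := by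
  classical
  obtain ⟨Q, hQ, hmax⟩ := G.maximumClique_exists
  refine ⟨Q, ?_, hQ⟩
  by_contra! hQsmall
  obtain ⟨S₀, -, hS₀⟩ :=
    exists_subset_card_eq (s := (univ : Finset V)) (n := k + t) (by rwa [card_univ])
  obtain ⟨T₀, -, hT₀, hT₀cl⟩ := h S₀ hS₀
  have hkQ := hT₀ ▸ hmax T₀ hT₀cl
  obtain ⟨C, hC, hCcard⟩ := exists_subset_card_eq (s := univ \ Q) (n := t + 1)
    (by rw [card_sdiff_of_subset (subset_univ _), card_univ]; omega)
  have hCQ : Disjoint C Q := disjoint_of_subset_left hC sdiff_disjoint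
  obtain ⟨S, -, hS, hfree⟩ := exists_card_eq_forall_isClique_card_lt hkt hQ hCQ hCcard
    (by rw [card_union_of_disjoint hCQ.symm]; omega) fun P _ hP => hmax P hP
  obtain ⟨T, hTS, hT, hTcl⟩ := h S hS
  exact (hfree T hTS hTcl).ne hT

end SimpleGraph

theorem clique_theorem_general {V : Type*} [Fintype V] (G : SimpleGraph V) (k m n : ℕ)
    (hk : 2 ≤ k) (hkm : k ≤ m) (hm2k : m ≤ 2 * k - 2)
    (hcard : Fintype.card V = n) (hnm : m ≤ n)
    (h : ∀ S : Finset V, S.card = m → ∃ T ⊆ S, T.card = k ∧ G.IsClique (T : Set V)) :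
    ∃ T : Finset V, n - m + k ≤ T.card ∧ G.IsClique (T : Set V) := by
  classical
  obtain ⟨t, rfl⟩ := Nat.exists_eq_add_of_le hkm
  obtain ⟨Q, hQ, hQcl⟩ :=
    G.exists_isClique_card_ge_of_forall_card_eq (by omega) (hcard ▸ hnm) h
  exact ⟨Q, by omega, hQcl⟩

/-- Berg et al., Theorem 11: if `k ≤ m ≤ 2k-2` and every `m` vertices of a graph on
`n ≥ m` vertices contain a `k`-clique, then the graph has a clique of size `n - m + k`. -/
theorem clique_theorem {V : Type*} [Fintype V] (G : SimpleGraph V) (k m n : ℕ)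
    (hk : 2 ≤ k) (hm : 2 ≤ m) (hkm : k ≤ m) (hm2k : m ≤ 2 * k - 2)
    (hcard : Fintype.card V = n) (hnm : m ≤ n)
    (h : ∀ S : Finset V, S.card = m → ∃ T ⊆ S, T.card = k ∧ G.IsClique (T : Set V)) :
    ∃ T : Finset V, n - m + k ≤ T.card ∧ G.IsClique (T : Set V) :=
  clique_theorem_general G k m n hk hkm hm2k hcard hnm h
end

section
/- Let m, k ≥ 2 with k ≤ m ≤ 2k-2, and let C_1, ..., C_n (n ≥ m) be axis-parallel closed rectangles in ℝ² such that among any m of them, some k share a common point. Then there is a point of ℝ² contained in at least n - m + k of the rectangles. -/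
/-!
Join two rectangles by an edge when they meet. Rectangles have Helly number two: the join of the
lower corners of a pairwise intersecting family lies in all of them. So it suffices to find a
clique of size `n - m + k` in this intersection graph, and this holds in every graph in which any
`m` vertices contain a `k`-clique, provided `m + 2 ≤ 2k`.

The graph statement is proved by induction on the number of vertices. In a counterexample `V`,
deleting any vertex leaves a clique of size `|V| - 1 - m + k`, which is therefore the clique
number `ω`, and every vertex is avoided by some maximum clique. A Hall-type exchange argument
then shows that at least `ω` vertices lie outside a maximum clique, so `2ω ≤ |V|`, that is
`|V| ≤ 2(m - k + 1) ≤ m`, a contradiction.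
-/

open Finset

namespace SimpleGraph

variable {α : Type*} [DecidableEq α] (G : SimpleGraph α) [DecidableRel G.Adj]

def nonNeighborsOutside (V I K : Finset α) : Finset α :=
  {u ∈ V \ I | ∃ x ∈ K, ¬G.Adj u x}

variable {G} {V I J K : Finset α}

lemma exists_maximum_clique_subset (V : Finset α) :
    ∃ I ⊆ V, G.IsClique (I : Set α) ∧
      ∀ J ⊆ V, G.IsClique (J : Set α) → #J ≤ #I := by
  obtain ⟨I, hI, hmax⟩ := exists_max_image
    {J ∈ V.powerset | G.IsClique ((J : Finset α) : Set α)} card ⟨∅, by simp⟩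
  simp only [mem_filter, mem_powerset] at hI hmax
  exact ⟨I, hI.1, hI.2, fun J hJV hJ => hmax J ⟨hJV, hJ⟩⟩

lemma adj_of_notMem_nonNeighborsOutside {u x : α} (hu : u ∈ V \ I)
    (hZ : u ∉ G.nonNeighborsOutside V I K) (hx : x ∈ K) : G.Adj u x := by
  by_contra hux
  exact hZ (mem_filter.2 ⟨hu, x, hx, hux⟩)

lemma nonNeighborsOutside_inter_subset (hJ : G.IsClique (J : Set α)) (hKI : K ⊆ I) :
    G.nonNeighborsOutside V I (K ∩ J) ⊆ G.nonNeighborsOutside V I K \ J := by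
  intro u hu
  obtain ⟨huVI, x, hx, hux⟩ := mem_filter.1 hu
  obtain ⟨hxK, hxJ⟩ := mem_inter.1 hx
  refine mem_sdiff.2 ⟨mem_filter.2 ⟨huVI, x, hxK, hux⟩, fun huJ => hux ?_⟩
  exact hJ huJ hxJ fun h => (mem_sdiff.1 huVI).2 (h ▸ hKI hxK)

lemma isClique_sdiff_nonNeighborsOutside_union (hJV : J ⊆ V) (hI : G.IsClique (I : Set α))
    (hJ : G.IsClique (J : Set α)) (hKI : K ⊆ I) :
    G.IsClique ((J \ G.nonNeighborsOutside V I K ∪ K \ J : Finset α) : Set α) := by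
  rw [coe_union, IsClique, Set.pairwise_union]
  refine ⟨hJ.subset (coe_subset.2 sdiff_subset),
    hI.subset (coe_subset.2 (sdiff_subset.trans hKI)), fun u hu x hx hux => ?_⟩
  simp only [coe_sdiff, Set.mem_sdiff, mem_coe] at hu hx
  have hadj : G.Adj u x := by
    by_cases huI : u ∈ I
    · exact hI huI (hKI hx.1) hux
    · exact adj_of_notMem_nonNeighborsOutside (mem_sdiff.2 ⟨hJV hu.1, huI⟩) hu.2 hx.1
  exact ⟨hadj, hadj.symm⟩

/-- Hall's condition for matching the maximum clique `I` into `V \ I` along non-edges. -/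
lemma card_le_card_nonNeighborsOutside (hIV : I ⊆ V) (hI : G.IsClique (I : Set α))
    (hmax : ∀ J ⊆ V, G.IsClique (J : Set α) → #J ≤ #I)
    (havoid : ∀ v ∈ I, ∃ J ⊆ V, G.IsClique (J : Set α) ∧ #I ≤ #J ∧ v ∉ J) :
    ∀ K ⊆ I, #K ≤ #(G.nonNeighborsOutside V I K) := by
  intro K
  induction K using Finset.strongInduction with
  | H K ih =>
  intro hKI
  obtain rfl | ⟨v, hv⟩ := K.eq_empty_or_nonempty
  · simp
  obtain ⟨J, hJV, hJ, hIJ, hvJ⟩ := havoid v (hKI hv)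
  set Z := G.nonNeighborsOutside V I K
  have hexchange : #(J \ Z) + #(K \ J) ≤ #J := by
    rw [← card_union_of_disjoint (disjoint_sdiff.mono_left sdiff_subset)]
    refine (hmax _ ?_ (isClique_sdiff_nonNeighborsOutside_union hJV hI hJ hKI)).trans hIJ
    exact union_subset (sdiff_subset.trans hJV) (sdiff_subset.trans (hKI.trans hIV))
  have hKJ : #(K ∩ J) ≤ #(Z \ J) := by
    have hssub : K ∩ J ⊂ K :=
      ssubset_of_subset_of_ne inter_subset_left fun h => hvJ (mem_of_mem_inter_right (h ▸ hv))
    exact (ih _ hssub (inter_subset_left.trans hKI)).trans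
      (card_le_card (nonNeighborsOutside_inter_subset hJ hKI))
  calc #K = #(K \ J) + #(K ∩ J) := (card_sdiff_add_card_inter K J).symm
    _ ≤ #(J ∩ Z) + #(Z \ J) := by
      have := card_sdiff_add_card_inter J Z
      omega
    _ = #Z := by rw [inter_comm, add_comm, card_sdiff_add_card_inter]

lemma two_mul_card_le_of_forall_exists_clique_notMem (hIV : I ⊆ V)
    (hI : G.IsClique (I : Set α)) (hmax : ∀ J ⊆ V, G.IsClique (J : Set α) → #J ≤ #I)
    (havoid : ∀ v ∈ I, ∃ J ⊆ V, G.IsClique (J : Set α) ∧ #I ≤ #J ∧ v ∉ J) :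
    2 * #I ≤ #V := by
  have hhall := card_le_card_nonNeighborsOutside hIV hI hmax havoid I subset_rfl
  have hout : #(G.nonNeighborsOutside V I I) ≤ #(V \ I) := card_le_card (filter_subset _ _)
  rw [card_sdiff_of_subset hIV] at hout
  omega

theorem exists_isClique_card_ge {k m : ℕ} (hmk : m + 2 ≤ 2 * k) (V : Finset α) (hmV : m ≤ #V)
    (hV : ∀ T ⊆ V, #T = m → ∃ T' ⊆ T, G.IsNClique k T') :
    ∃ U ⊆ V, G.IsClique (U : Set α) ∧ #V - m + k ≤ #U := by
  induction V using Finset.strongInduction with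
  | H V ih =>
  obtain hmV | hmV := hmV.eq_or_lt
  · obtain ⟨T, hTV, hT⟩ := hV V subset_rfl hmV.symm
    exact ⟨T, hTV, hT.isClique, by rw [hT.card_eq]; omega⟩
  have hdelete :
      ∀ v ∈ V, ∃ J ⊆ V, G.IsClique (J : Set α) ∧ #V - m + k ≤ #J + 1 ∧ v ∉ J := by
    intro v hv
    have hcard := card_erase_of_mem hv
    obtain ⟨J, hJV, hJ, hJcard⟩ := ih (V.erase v) (erase_ssubset hv) (by omega)
      fun T hT => hV T (hT.trans (erase_subset v V))
    exact ⟨J, hJV.trans (erase_subset v V), hJ, by omega, fun h => (mem_erase.1 (hJV h)).1 rfl⟩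
  obtain ⟨I, hIV, hI, hmax⟩ := exists_maximum_clique_subset (G := G) V
  by_contra! hsmall
  have hIsmall := hsmall I hIV hI
  obtain ⟨v, hv⟩ := card_pos.1 ((Nat.zero_le m).trans_lt hmV)
  obtain ⟨J, hJV, hJ, hJcard, -⟩ := hdelete v hv
  have hIlarge := hmax J hJV hJ
  have hhalf := two_mul_card_le_of_forall_exists_clique_notMem hIV hI hmax fun v hv => by
    obtain ⟨J, hJV, hJ, hJcard, hvJ⟩ := hdelete v (hIV hv)
    exact ⟨J, hJV, hJ, by omega, hvJ⟩
  omega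

end SimpleGraph

def intersectionGraph {ι β : Type*} (s : ι → Set β) : SimpleGraph ι where
  Adj i j := i ≠ j ∧ (s i ∩ s j).Nonempty
  symm := ⟨fun _ _ h => ⟨h.1.symm, Set.inter_comm .. ▸ h.2⟩⟩
  loopless := ⟨fun _ h => h.1 rfl⟩

section intersectionGraph

variable {ι β : Type*} {s : ι → Set β} {T : Set ι}

lemma isClique_intersectionGraph_of_nonempty_biInter (h : (⋂ i ∈ T, s i).Nonempty) :
    (intersectionGraph s).IsClique T := by
  obtain ⟨p, hp⟩ := h
  rw [Set.mem_iInter₂] at hp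
  exact fun i hi j hj hij => ⟨hij, p, hp i hi, hp j hj⟩

lemma SimpleGraph.IsClique.inter_nonempty (hT : (intersectionGraph s).IsClique T)
    (hT2 : T.Nontrivial) {i j : ι} (hi : i ∈ T) (hj : j ∈ T) : (s i ∩ s j).Nonempty := by
  obtain hij | rfl := ne_or_eq i j
  · obtain ⟨-, hne⟩ := hT hi hj hij
    exact hne
  obtain ⟨l, hl, hli⟩ := hT2.exists_ne i
  obtain ⟨-, hne⟩ := hT hi hl hli.symm
  rw [Set.inter_self]
  exact hne.mono Set.inter_subset_left

end intersectionGraph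

lemma exists_forall_mem_Icc_of_inter_nonempty {ι α : Type*} [SemilatticeSup α] {U : Finset ι}
    (hU : U.Nonempty) {l u : ι → α}
    (h : ∀ i ∈ U, ∀ j ∈ U, (Set.Icc (l i) (u i) ∩ Set.Icc (l j) (u j)).Nonempty) :
    ∃ z, ∀ i ∈ U, z ∈ Set.Icc (l i) (u i) := by
  refine ⟨U.sup' hU l, fun i hi => ⟨le_sup' l hi, sup'_le hU l fun j hj => ?_⟩⟩
  obtain ⟨p, hpj, hpi⟩ := h j hj i hi
  exact hpj.1.trans hpi.2

open Classical in
theorem agreeable_two_box_general (k m n : ℕ) (hk : 2 ≤ k)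
    (hm2k : m ≤ 2 * k - 2) (hmn : m ≤ n) (a b c d : Fin n → ℝ)
    (h : ∀ T : Finset (Fin n), T.card = m → ∃ T' ⊆ T, T'.card = k ∧
      (⋂ i ∈ T', Set.Icc (a i) (b i) ×ˢ Set.Icc (c i) (d i)).Nonempty) :
    ∃ z : ℝ × ℝ, n - m + k ≤ (Finset.univ.filter fun i : Fin n =>
      z ∈ Set.Icc (a i) (b i) ×ˢ Set.Icc (c i) (d i)).card := by
  simp only [Set.Icc_prod_Icc] at h ⊢
  obtain ⟨U, -, hU, hUcard⟩ :=
    (intersectionGraph fun i => Set.Icc (a i, c i) (b i, d i)).exists_isClique_card_ge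
      (k := k) (m := m) (by omega) univ (by simpa using hmn) fun T _ hT => by
        obtain ⟨T', hT'T, hT'card, hT'⟩ := h T hT
        exact ⟨T', hT'T, isClique_intersectionGraph_of_nonempty_biInter hT', hT'card⟩
  rw [card_univ, Fintype.card_fin] at hUcard
  have hU2 : (U : Set (Fin n)).Nontrivial := one_lt_card_iff_nontrivial.1 (by omega)
  obtain ⟨z, hz⟩ := exists_forall_mem_Icc_of_inter_nonempty hU2.nonempty
    fun i hi j hj => hU.inter_nonempty hU2 hi hj
  exact ⟨z, hUcard.trans (card_le_card fun i hi => mem_filter.2 ⟨mem_univ i, hz i hi⟩)⟩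

/-- Agreeable 2-Box Society Theorem (Berg et al.): if `k ≤ m ≤ 2k-2` and among any `m` of
`n ≥ m` axis-parallel closed rectangles in ℝ² some `k` share a point, then some point of
ℝ² lies in at least `n - m + k` of the rectangles. -/
theorem agreeable_two_box (k m n : ℕ) (hk : 2 ≤ k) (hm : 2 ≤ m) (hkm : k ≤ m)
    (hm2k : m ≤ 2 * k - 2) (hmn : m ≤ n) (a b c d : Fin n → ℝ)
    (h : ∀ T : Finset (Fin n), T.card = m → ∃ T' ⊆ T, T'.card = k ∧
      (⋂ i ∈ T', Set.Icc (a i) (b i) ×ˢ Set.Icc (c i) (d i)).Nonempty) :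
    ∃ z : ℝ × ℝ, n - m + k ≤ (Finset.univ.filter fun i : Fin n =>
      z ∈ Set.Icc (a i) (b i) ×ˢ Set.Icc (c i) (d i)).card :=
  agreeable_two_box_general k m n hk hm2k hmn a b c d h
end

section
/- Let n = 4ℓ+1 for a positive integer ℓ, and on the torus (ℝ/(2nℤ))² define n squares A_0, ..., A_{n-1}, where A_i = [2i, 2i+n] × [4i, 4i+n] (coordinates mod 2n). Then every two of these squares intersect, and the maximum number of squares containing a single common point is exactly ℓ + 1. -/
/-!
A point `z` lies in `A i` iff the corner `(2i, 4i)` lies in the square `z - [0, n]²` of the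
torus. Lifting to `ℝ²`, the corners are the points `(2p, 2q)` with `q ≡ 2p (mod n)`, and every
square containing `z` yields such a lattice point `(p, q)` in a fixed box of `(2ℓ + 1) × (2ℓ + 1)`
integers, with `p ≡ i (mod n)`. The integer functional `((2ℓ + 1) q - p) / n` is injective on the
lattice points of such a box and takes at most `ℓ + 1` values there, which gives the upper bound;
the point `(2ℓ, 4ℓ)` lies in `A 0, …, A ℓ`. Two closed arcs of half the circumference always meet,
hence so do any two squares.
-/

open Classical Set

namespace AddCircle

def arc (T a w : ℝ) : Set (AddCircle T) := (fun t : ℝ => (t : AddCircle T)) '' Icc a (a + w)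

lemma mem_arc_iff {T a w : ℝ} (u : ℝ) :
    (u : AddCircle T) ∈ arc T a w ↔ ∃ k : ℤ, u + k * T ∈ Icc a (a + w) := by
  constructor
  · rintro ⟨t, ht, htu : (t : AddCircle T) = u⟩
    obtain ⟨k, hk⟩ := (coe_eq_zero_iff T).1
      (by rw [coe_sub, htu, sub_self] : ((t - u : ℝ) : AddCircle T) = 0)
    refine ⟨k, ?_⟩
    rwa [← zsmul_eq_mul, hk, add_sub_cancel]
  · rintro ⟨k, hk⟩
    refine ⟨_, hk, show ((u + k * T : ℝ) : AddCircle T) = u from ?_⟩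
    rw [← zsmul_eq_mul, coe_add, coe_zsmul, coe_period, smul_zero, add_zero]

lemma arc_inter_arc_nonempty {T w : ℝ} (hT : 0 < T) (hw : T ≤ 2 * w) (a b : ℝ) :
    (arc T a w ∩ arc T b w).Nonempty := by
  set k := round ((a - b) / T)
  have hk : |a - b - k * T| ≤ w := by
    calc |a - b - k * T| = |(a - b) / T - k| * T := by
          rw [← abs_of_pos hT, ← abs_mul, abs_of_pos hT, sub_mul, div_mul_cancel₀ _ hT.ne']
      _ ≤ 1 / 2 * T := by gcongr; exact abs_sub_round _
      _ ≤ w := by linarith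
  obtain ⟨hk₁, hk₂⟩ := abs_le.1 hk
  refine ⟨((max a (b + k * T) : ℝ) : AddCircle T), (mem_arc_iff _).2 ⟨0, ?_⟩,
    (mem_arc_iff _).2 ⟨-k, ?_⟩⟩
  all_goals
    push_cast
    rcases max_cases a (b + k * T) with ⟨h, _⟩ | ⟨h, _⟩ <;> rw [h] <;> constructor <;> linarith

end AddCircle

lemma Int.card_le_of_forall_sub_le {s : Finset ℤ} {d : ℕ} (h : ∀ x ∈ s, ∀ y ∈ s, x - y ≤ d) :
    s.card ≤ d + 1 := by
  rcases s.eq_empty_or_nonempty with rfl | hs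
  · simp
  calc s.card ≤ (Finset.Icc (s.min' hs) (s.min' hs + d)).card :=
        Finset.card_le_card fun x hx => Finset.mem_Icc.2
          ⟨s.min'_le x hx, by linarith [h x hx _ (s.min'_mem hs)]⟩
    _ = d + 1 := by simp [Int.card_Icc]; omega

lemma Int.mem_Icc_ceil_of_le_of_lt {α : Type*} [Ring α] [LinearOrder α] [IsStrictOrderedRing α]
    [FloorRing α] {a : α} {p d : ℤ} (h₁ : a ≤ p) (h₂ : p < a + d + 1) :
    p ∈ Finset.Icc ⌈a⌉ (⌈a⌉ + d) := by
  have : p - d - 1 < ⌈a⌉ :=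
    Int.lt_ceil.2 (by push_cast; rw [sub_sub, sub_lt_iff_lt_add]; simpa only [add_assoc] using h₂)
  exact Finset.mem_Icc.2 ⟨Int.ceil_le.2 h₁, by omega⟩

/-- For `n = 4ℓ + 1`, the points `(2p, 2q)` with `(p, q) ∈ latticeBox ℓ P Q` are the lifts to `ℝ²`
of the corners `(2i, 4i)` (mod `2n`) lying in `[2P, 2P + 4ℓ] × [2Q, 2Q + 4ℓ]`. -/
noncomputable def latticeBox (ℓ : ℕ) (P Q : ℤ) : Finset (ℤ × ℤ) :=
  (Finset.Icc P (P + 2 * ℓ) ×ˢ Finset.Icc Q (Q + 2 * ℓ)).filter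
    fun x => (4 * ℓ + 1 : ℤ) ∣ x.2 - 2 * x.1

lemma card_latticeBox_le (ℓ : ℕ) (P Q : ℤ) : (latticeBox ℓ P Q).card ≤ ℓ + 1 := by
  set h : ℤ × ℤ → ℤ := fun x => ((2 * ℓ + 1) * x.2 - x.1) / (4 * ℓ + 1)
  have hh : ∀ x ∈ latticeBox ℓ P Q, (4 * ℓ + 1) * h x = (2 * ℓ + 1) * x.2 - x.1 := by
    intro x hx
    obtain ⟨-, c, hc⟩ := Finset.mem_filter.1 hx
    exact Int.mul_ediv_cancel' ⟨(2 * ℓ + 1) * c + x.1, by linear_combination (2 * (ℓ:ℤ) + 1) * hc⟩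
  have hbox : ∀ x ∈ latticeBox ℓ P Q, ∀ y ∈ latticeBox ℓ P Q,
      |x.1 - y.1| ≤ 2 * ℓ ∧ |x.2 - y.2| ≤ 2 * ℓ := by
    simp only [latticeBox, Finset.mem_filter, Finset.mem_product, Finset.mem_Icc]
    intro x hx y hy
    constructor <;> rw [abs_le] <;> constructor <;> omega
  have hinj : InjOn h (latticeBox ℓ P Q) := by
    intro x hx y hy hxy
    have hq : (2 * ℓ + 1) * (x.2 - y.2) = x.1 - y.1 := by
      linear_combination hh y hy - hh x hx + (4 * (ℓ:ℤ) + 1) * hxy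
    have h1 : x.1 - y.1 = 0 :=
      Int.eq_zero_of_abs_lt_dvd ⟨_, hq.symm⟩ (by linarith [(hbox x hx y hy).1])
    have h2 : x.2 - y.2 = 0 := by simpa [h1, (by positivity : (2 * (ℓ:ℤ) + 1) ≠ 0)] using hq
    exact Prod.ext (by linarith) (by linarith)
  rw [← Finset.card_image_of_injOn hinj]
  refine Int.card_le_of_forall_sub_le ?_
  simp only [Finset.mem_image]
  rintro _ ⟨x, hx, rfl⟩ _ ⟨y, hy, rfl⟩
  obtain ⟨h1, h2⟩ := hbox x hx y hy
  rw [abs_le] at h1 h2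
  by_contra! hlt
  nlinarith [hh x hx, hh y hy]

def uniformSquare (n i : ℕ) : Set (AddCircle ((2 * n : ℕ) : ℝ) × AddCircle ((2 * n : ℕ) : ℝ)) :=
  AddCircle.arc _ (2 * i) n ×ˢ AddCircle.arc _ (4 * i) n

lemma exists_mem_latticeBox {ℓ n : ℕ} (hn : n = 4 * ℓ + 1) {u v : ℝ} {i : ℕ}
    (hu : (u : AddCircle ((2 * n : ℕ) : ℝ)) ∈ AddCircle.arc _ (2 * i) n)
    (hv : (v : AddCircle ((2 * n : ℕ) : ℝ)) ∈ AddCircle.arc _ (4 * i) n) :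
    ∃ x ∈ latticeBox ℓ ⌈(u - n) / 2⌉ ⌈(v - n) / 2⌉, (n : ℤ) ∣ x.1 - i := by
  obtain ⟨k, hk₁, hk₂⟩ := (AddCircle.mem_arc_iff u).1 hu
  obtain ⟨m, hm₁, hm₂⟩ := (AddCircle.mem_arc_iff v).1 hv
  have hnℓ : (n : ℝ) = 4 * ℓ + 1 := by rw [hn]; push_cast; ring
  push_cast at hk₁ hk₂ hm₁ hm₂
  refine ⟨(i - n * k, 2 * i - n * m), Finset.mem_filter.2 ⟨Finset.mem_product.2 ⟨?_, ?_⟩, ?_⟩,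
    ⟨-k, by ring⟩⟩
  · exact Int.mem_Icc_ceil_of_le_of_lt (by push_cast; linarith) (by push_cast; linarith)
  · exact Int.mem_Icc_ceil_of_le_of_lt (by push_cast; linarith) (by push_cast; linarith)
  · exact ⟨2 * k - m, by rw [hn]; push_cast; ring⟩

lemma card_filter_mem_uniformSquare_le {ℓ n : ℕ} (hn : n = 4 * ℓ + 1)
    (z : AddCircle ((2 * n : ℕ) : ℝ) × AddCircle ((2 * n : ℕ) : ℝ)) :
    (Finset.univ.filter fun i : Fin n => z ∈ uniformSquare n i).card ≤ ℓ + 1 := by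
  obtain ⟨u, hu⟩ := QuotientAddGroup.mk_surjective z.1
  obtain ⟨v, hv⟩ := QuotientAddGroup.mk_surjective z.2
  have hlift : ∀ i ∈ Finset.univ.filter fun i : Fin n => z ∈ uniformSquare n i,
      ∃ x ∈ latticeBox ℓ ⌈(u - n) / 2⌉ ⌈(v - n) / 2⌉, (n : ℤ) ∣ x.1 - (i : ℕ) := by
    intro i hi
    obtain ⟨hzu, hzv⟩ := (Finset.mem_filter.1 hi).2
    exact exists_mem_latticeBox hn (hu ▸ hzu) (hv ▸ hzv)
  choose! f hf_mem hf_dvd using hlift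
  refine (Finset.card_le_card_of_injOn f hf_mem fun i hi j hj hij => Fin.ext ?_).trans
    (card_latticeBox_le ℓ _ _)
  have hdvd : (n : ℤ) ∣ (j : ℕ) - (i : ℕ) := by
    simpa [hij] using dvd_sub (hf_dvd i hi) (hf_dvd j hj)
  have := Int.eq_zero_of_abs_lt_dvd hdvd (by rw [abs_lt]; omega)
  omega

lemma mem_uniformSquare_of_le {ℓ n i : ℕ} (hn : n = 4 * ℓ + 1) (hi : i ≤ ℓ) :
    (((2 * ℓ : ℝ) : AddCircle ((2 * n : ℕ) : ℝ)), ((4 * ℓ : ℝ) : AddCircle ((2 * n : ℕ) : ℝ))) ∈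
      uniformSquare n i := by
  have hiℓ : (i : ℝ) ≤ ℓ := by exact_mod_cast hi
  have hnℓ : (n : ℝ) = 4 * ℓ + 1 := by rw [hn]; push_cast; ring
  refine ⟨(AddCircle.mem_arc_iff _).2 ⟨0, ?_, ?_⟩, (AddCircle.mem_arc_iff _).2 ⟨0, ?_, ?_⟩⟩ <;>
    push_cast <;> linarith

lemma le_card_filter_mem_uniformSquare {ℓ n : ℕ} (hn : n = 4 * ℓ + 1) :
    ℓ + 1 ≤ (Finset.univ.filter fun i : Fin n =>
      (((2 * ℓ : ℝ) : AddCircle ((2 * n : ℕ) : ℝ)), ((4 * ℓ : ℝ) : AddCircle ((2 * n : ℕ) : ℝ))) ∈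
        uniformSquare n i).card := by
  calc ℓ + 1 = (Finset.univ : Finset (Fin (ℓ + 1))).card := (Finset.card_fin _).symm
    _ ≤ _ := Finset.card_le_card_of_injOn (Fin.castLE (by omega))
        (fun i _ => Finset.mem_filter.2
          ⟨Finset.mem_univ _, mem_uniformSquare_of_le hn (Fin.is_le i)⟩)
        (Fin.castLE_injective _).injOn

theorem uniform_toroidal_society_general (ℓ : ℕ) (n : ℕ) (hn : n = 4 * ℓ + 1)
    (A : Fin n → Set (AddCircle ((2 * n : ℕ) : ℝ) × AddCircle ((2 * n : ℕ) : ℝ)))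
    (hA : ∀ i : Fin n, A i =
      ((fun t : ℝ => (t : AddCircle ((2 * n : ℕ) : ℝ))) ''
        Set.Icc (2 * (i : ℕ) : ℝ) ((2 * (i : ℕ) : ℝ) + n)) ×ˢ
      ((fun t : ℝ => (t : AddCircle ((2 * n : ℕ) : ℝ))) ''
        Set.Icc (4 * (i : ℕ) : ℝ) ((4 * (i : ℕ) : ℝ) + n))) :
    (∀ i j : Fin n, (A i ∩ A j).Nonempty) ∧
    (∃ z, (Finset.univ.filter fun i : Fin n => z ∈ A i).card = ℓ + 1) ∧
    (∀ z, (Finset.univ.filter fun i : Fin n => z ∈ A i).card ≤ ℓ + 1) := by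
  obtain rfl : A = fun i : Fin n => uniformSquare n i := funext hA
  have hperiod : (0 : ℝ) < ((2 * n : ℕ) : ℝ) := by rw [hn]; positivity
  have hhalf : ((2 * n : ℕ) : ℝ) ≤ 2 * n := by push_cast; rfl
  have harcs := AddCircle.arc_inter_arc_nonempty hperiod hhalf
  refine ⟨fun i j => ?_, ⟨_, le_antisymm (card_filter_mem_uniformSquare_le hn _)
    (le_card_filter_mem_uniformSquare hn)⟩, card_filter_mem_uniformSquare_le hn⟩
  simp only [uniformSquare, prod_inter_prod]
  exact (harcs _ _).prod (harcs _ _)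

/-- The uniform toroidal society: for `n = 4ℓ+1`, the `n` squares
`A i = [2i, 2i+n] × [4i, 4i+n]` (mod `2n`) on the `2n × 2n` torus pairwise intersect, and
the maximum number of squares containing a single common point is exactly `ℓ + 1`. -/
theorem uniform_toroidal_society (ℓ : ℕ) (hℓ : 1 ≤ ℓ) (n : ℕ) (hn : n = 4 * ℓ + 1)
    (A : Fin n → Set (AddCircle ((2 * n : ℕ) : ℝ) × AddCircle ((2 * n : ℕ) : ℝ)))
    (hA : ∀ i : Fin n, A i =
      ((fun t : ℝ => (t : AddCircle ((2 * n : ℕ) : ℝ))) ''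
        Set.Icc (2 * (i : ℕ) : ℝ) ((2 * (i : ℕ) : ℝ) + n)) ×ˢ
      ((fun t : ℝ => (t : AddCircle ((2 * n : ℕ) : ℝ))) ''
        Set.Icc (4 * (i : ℕ) : ℝ) ((4 * (i : ℕ) : ℝ) + n))) :
    (∀ i j : Fin n, (A i ∩ A j).Nonempty) ∧
    (∃ z, (Finset.univ.filter fun i : Fin n => z ∈ A i).card = ℓ + 1) ∧
    (∀ z, (Finset.univ.filter fun i : Fin n => z ∈ A i).card ≤ ℓ + 1) :=
  uniform_toroidal_society_general ℓ n hn A hA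
end

section
/- For every n ≡ 1 (mod 4) there exists a family of n subsets of the torus (ℝ/ℤ)², each a product of two closed arcs, such that every two sets intersect but no point of the torus is contained in more than (n-1)/4 + 1 of the sets. -/
open Classical

/-!
Write `n = 4m + 1` and take for `C i` the product of the arcs `[i/n, (i + 2m)/n]` and
`[2i/n, (2i + 2m)/n]`. Two arcs of `2m` steps of the grid `(1/n)ℤ` starting at grid points
always meet, because `2 · 2m + 1 ≥ n`. A point with grid coordinates `u = ⌊n x⌋`, `v = ⌊n y⌋`
lies in `C i` only if `t = (u - i) mod n` and `(v - 2u + 2t) mod n` both lie in `[0, 2m]`;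
as `t` runs through `[0, 2m]`, the progression `v - 2u + 2t` of step `2` meets `[0, 2m]`
modulo `n` at most `m + 1` times.
-/

def gridArc (n k : ℕ) (a : ℤ) : Set (AddCircle (1 : ℝ)) :=
  Arc (a / n) ((a + k) / n)

lemma exists_int_eq_add_of_coe_eq {x t : ℝ} (h : (t : AddCircle (1 : ℝ)) = x) :
    ∃ j : ℤ, x = t + j := by
  have hxt : ((x - t : ℝ) : AddCircle (1 : ℝ)) = 0 := by rw [AddCircle.coe_sub, h, sub_self]
  obtain ⟨j, hj⟩ := (AddCircle.coe_eq_zero_iff (1 : ℝ)).1 hxt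
  exact ⟨j, by rw [zsmul_one] at hj; linarith⟩

lemma coe_div_mem_gridArc {n k : ℕ} (hn : 0 < n) {a c r : ℤ} (hr : 0 ≤ r) (hrk : r ≤ k)
    (hc : a + r ≡ c [ZMOD n]) : ((c / n : ℝ) : AddCircle (1 : ℝ)) ∈ gridArc n k a := by
  obtain ⟨j, hj⟩ := (Int.modEq_iff_dvd.1 hc)
  have hnR : (0 : ℝ) < n := by exact_mod_cast hn
  refine ⟨(a + r) / n, ⟨by gcongr; exact le_add_of_nonneg_right (by exact_mod_cast hr),
    by gcongr; exact_mod_cast hrk⟩, ?_⟩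
  have hj' : (a + r : ℝ) = c - n * j := by exact_mod_cast (by linarith : a + r = c - n * j)
  rw [hj', sub_div, mul_div_cancel_left₀ _ hnR.ne']
  simp

lemma gridArc_inter_nonempty {n k : ℕ} (hn : 0 < n) (hk : n ≤ 2 * k + 1) (a b : ℤ) :
    (gridArc n k a ∩ gridArc n k b).Nonempty := by
  have hself (c : ℤ) : ((c / n : ℝ) : AddCircle (1 : ℝ)) ∈ gridArc n k c :=
    coe_div_mem_gridArc hn le_rfl (Nat.cast_nonneg k) (by simp)
  have hd0 := Int.emod_nonneg (b - a) (by omega : (n : ℤ) ≠ 0)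
  have hdn := Int.emod_lt_of_pos (b - a) (by omega : (0 : ℤ) < n)
  have hba : a + (b - a) % n ≡ b [ZMOD n] := by
    simpa using ((Int.mod_modEq (b - a) n).add_left a)
  rcases le_or_gt ((b - a) % n) k with h | h
  · exact ⟨_, coe_div_mem_gridArc hn hd0 h hba, hself b⟩
  · refine ⟨_, hself a, coe_div_mem_gridArc hn (r := n - (b - a) % n) (by omega) (by omega) ?_⟩
    exact Int.modEq_iff_dvd.2 ⟨-1 - (b - a) / n, by linarith [Int.mul_ediv_add_emod (b - a) n]⟩

lemma emod_floor_mul_sub_le_of_mem_gridArc {n k : ℕ} (hn : 0 < n) {a : ℤ} {x : ℝ}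
    (hx : (x : AddCircle (1 : ℝ)) ∈ gridArc n k a) : (⌊n * x⌋ - a) % n ≤ k := by
  obtain ⟨t, ⟨hat, htk⟩, htx⟩ := hx
  obtain ⟨j, rfl⟩ := exists_int_eq_add_of_coe_eq htx
  have hnR : (0 : ℝ) < n := by exact_mod_cast hn
  have hlo : a ≤ ⌊n * t⌋ := Int.le_floor.2 (by rw [div_le_iff₀ hnR] at hat; linarith)
  have hhi : ⌊n * t⌋ ≤ a + k :=
    Int.floor_le_iff.2 (by rw [le_div_iff₀ hnR] at htk; push_cast; linarith)
  have hfloor : ⌊n * (t + j)⌋ - a = ⌊n * t⌋ - a + n * j := by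
    rw [mul_add, show (n * j : ℝ) = ((n * j : ℤ) : ℝ) by push_cast; rfl, Int.floor_add_intCast]
    ring
  rw [hfloor, Int.add_mul_emod_self_left, Int.emod_def]
  nlinarith [Int.ediv_nonneg (sub_nonneg.2 hlo) (Int.natCast_nonneg n)]

lemma card_filter_emod_le {n m : ℕ} (hn : n = 4 * m + 1) {w : ℤ} (hw0 : 0 ≤ w) (hw : w < n) :
    ((Finset.Icc (0 : ℤ) (2 * m)).filter fun t => (w + 2 * t) % n ≤ 2 * m).card
      ≤ m + 1 := by
  have hwrap : ∀ t ∈ Finset.Icc (0 : ℤ) (2 * m),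
      (w + 2 * t) % n = w + 2 * t ∨ (w + 2 * t) % n = w + 2 * t - n := by
    intro t ht
    rw [Finset.mem_Icc] at ht
    rcases lt_or_ge (w + 2 * t) n with h | h
    · exact .inl (Int.emod_eq_of_lt (by omega) h)
    · right
      have := Int.emod_eq_of_lt (a := w + 2 * t - n) (b := n) (by omega) (by omega)
      rwa [Int.sub_emod_right] at this
  -- Two good residues `(w + 2 * t) % n` can be adjacent only as the pair `w - 1, w`;
  -- halving with the rounding chosen by the parity of `w` keeps that pair apart.
  calc _ ≤ (Finset.Icc (0 : ℤ) m).card := by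
        refine Finset.card_le_card_of_injOn (fun t => ((w + 2 * t) % n + w % 2) / 2) ?_ ?_
        · intro t ht
          simp only [Finset.mem_coe, Finset.mem_filter, Finset.mem_Icc] at ht ⊢
          have := Int.emod_nonneg (w + 2 * t) (b := n) (by omega)
          rcases hwrap t (Finset.mem_Icc.2 ht.1) with h | h <;> omega
        · intro t ht s hs hts
          simp only [Finset.mem_coe, Finset.mem_filter] at ht hs hts
          rcases hwrap t ht.1 with h | h <;> rcases hwrap s hs.1 with h' | h' <;>
            simp only [Finset.mem_Icc] at ht hs <;> omega
    _ = m + 1 := by simp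

def slopeTwoBox (n m : ℕ) (i : Fin n) : Set (AddCircle (1 : ℝ) × AddCircle (1 : ℝ)) :=
  gridArc n (2 * m) i ×ˢ gridArc n (2 * m) (2 * i)

lemma slopeTwoBox_inter_nonempty {n m : ℕ} (hn : n = 4 * m + 1) (i j : Fin n) :
    (slopeTwoBox n m i ∩ slopeTwoBox n m j).Nonempty := by
  have hn0 : 0 < n := by omega
  have hk : n ≤ 2 * (2 * m) + 1 := by omega
  rw [slopeTwoBox, slopeTwoBox, Set.prod_inter_prod]
  exact (gridArc_inter_nonempty hn0 hk _ _).prod (gridArc_inter_nonempty hn0 hk _ _)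

lemma card_filter_mem_slopeTwoBox_le {n m : ℕ} (hn : n = 4 * m + 1)
    (z : AddCircle (1 : ℝ) × AddCircle (1 : ℝ)) :
    (Finset.univ.filter fun i : Fin n => z ∈ slopeTwoBox n m i).card ≤ m + 1 := by
  have hn0 : 0 < n := by omega
  have hnZ : (n : ℤ) ≠ 0 := by omega
  obtain ⟨x, hx⟩ := QuotientAddGroup.mk_surjective z.1
  obtain ⟨y, hy⟩ := QuotientAddGroup.mk_surjective z.2
  set u := ⌊(n : ℝ) * x⌋
  set v := ⌊(n : ℝ) * y⌋
  calc _ ≤ ((Finset.Icc (0 : ℤ) (2 * m)).filter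
          fun t => ((v - 2 * u) % n + 2 * t) % n ≤ 2 * m).card := by
        refine Finset.card_le_card_of_injOn (fun i => (u - i) % n) ?_ ?_
        · intro i hi
          simp only [Finset.coe_filter, Finset.mem_univ, true_and, slopeTwoBox, Set.mem_prod,
            Set.mem_ofPred_eq] at hi
          have hu := emod_floor_mul_sub_le_of_mem_gridArc hn0 (hx ▸ hi.1)
          have hv := emod_floor_mul_sub_le_of_mem_gridArc hn0 (hy ▸ hi.2)
          have hvu : (v - 2 * u) % n + 2 * ((u - i) % n) ≡ v - 2 * i [ZMOD n] := by
            have := (Int.mod_modEq (v - 2 * u) n).add ((Int.mod_modEq (u - i) n).mul_left 2)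
            rwa [show v - 2 * u + 2 * (u - i) = v - 2 * i by ring] at this
          simp only [Finset.coe_filter, Finset.mem_Icc, Set.mem_ofPred_eq]
          exact ⟨⟨Int.emod_nonneg _ hnZ, hu⟩, hvu ▸ hv⟩
        · intro i _ j _ hij
          have hij' : ((i : ℕ) : ℤ) ≡ j [ZMOD n] := by simpa using Int.ModEq.sub_left u hij
          exact Fin.ext ((Int.natCast_modEq_iff.1 hij').eq_of_lt_of_lt i.isLt j.isLt)
    _ ≤ m + 1 := card_filter_emod_le hn (Int.emod_nonneg _ hnZ) (Int.emod_lt_of_pos _ (by omega))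

/-- Sharpness for `(2,2)`-agreeable toroidal societies: for every `n ≡ 1 (mod 4)` there
are `n` products of arcs on the torus, pairwise intersecting, such that no point of the
torus lies in more than `(n-1)/4 + 1` of them. -/
theorem toroidal_sharpness (n : ℕ) (hn : n % 4 = 1) :
    ∃ C : Fin n → Set (AddCircle (1 : ℝ) × AddCircle (1 : ℝ)),
      (∀ i : Fin n, ∃ a b c d : ℝ, C i = Arc a b ×ˢ Arc c d) ∧
      (∀ i j : Fin n, (C i ∩ C j).Nonempty) ∧
      (∀ z, (Finset.univ.filter fun i : Fin n => z ∈ C i).card ≤ (n - 1) / 4 + 1) := by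
  obtain ⟨m, hm⟩ : ∃ m, n = 4 * m + 1 := ⟨n / 4, by omega⟩
  refine ⟨slopeTwoBox n m, fun i => ⟨_, _, _, _, rfl⟩, slopeTwoBox_inter_nonempty hm, fun z => ?_⟩
  rw [show (n - 1) / 4 + 1 = m + 1 by omega]
  exact card_filter_mem_slopeTwoBox_le hm z
end

section
/- There exists a family of 20 subsets of the cylinder ℝ × (ℝ/ℤ), each a product of a closed interval with a closed arc, such that among any 5 of the sets some 2 intersect, but no point of the cylinder is contained in more than 3 of the sets. -/
open Classical

/-!
Put set `i < 20` on the circle `{i / 5} × ℝ/ℤ` of the cylinder, carrying the arc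
`[k/5, (k+2)/5]` with `k = i % 5`. Any two of these five arcs meet (across the seam `0 = 1` if
their starting points are far apart), so two sets in a common stratum meet, and among any five
sets two share one of the four strata. A point of the cylinder lies in one stratum only, and a
point `x` of the circle lies in the arc of `k` only if `k` is the residue mod 5 of an integer in
`[5x - 2, 5x]`; there are at most three such integers.
-/

open Finset

lemma coe_mem_Arc_iff {a b x : ℝ} :
    (x : AddCircle (1 : ℝ)) ∈ Arc a b ↔ ∃ j : ℤ, x + j ∈ Set.Icc a b := by
  constructor
  · rintro ⟨t, ht, htx⟩
    rw [← sub_eq_zero, ← AddCircle.coe_sub, AddCircle.coe_eq_zero_iff] at htx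
    obtain ⟨j, hj⟩ := htx
    rw [zsmul_one, eq_sub_iff_add_eq'] at hj
    exact ⟨j, hj ▸ ht⟩
  · rintro ⟨j, hj⟩
    exact ⟨x + j, hj, by simp⟩

/-- For `n = 2m + 1`, these `n` arcs form Hardin's circular example. -/
def hardinArc (n m k : ℕ) : Set (AddCircle (1 : ℝ)) :=
  Arc ((k : ℝ) / n) (((k : ℝ) + m) / n)

lemma coe_div_mem_hardinArc_iff {n m k : ℕ} (hn : 0 < n) (y : ℝ) :
    ((y / n : ℝ) : AddCircle (1 : ℝ)) ∈ hardinArc n m k ↔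
      ∃ j : ℤ, y + n * j ∈ Set.Icc (k : ℝ) (k + m) := by
  have hn' : (0 : ℝ) < n := Nat.cast_pos.mpr hn
  have hscale (j : ℤ) : y / n + j = (y + n * j) / n := by field_simp
  simp only [hardinArc, coe_mem_Arc_iff, hscale, Set.mem_Icc,
    div_le_div_iff_of_pos_right hn']

lemma hardinArc_inter_nonempty {n m k l : ℕ} (hnm : n ≤ 2 * m + 1) (hk : k < n) (hl : l < n) :
    (hardinArc n m k ∩ hardinArc n m l).Nonempty := by
  wlog hkl : k ≤ l generalizing k l
  · exact Set.inter_comm _ _ ▸ this hl hk (by omega)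
  have hn : 0 < n := by omega
  by_cases hnear : l ≤ k + m
  · refine ⟨((l / n : ℝ) : AddCircle (1 : ℝ)), ?_, ?_⟩ <;>
      refine (coe_div_mem_hardinArc_iff hn _).mpr ⟨0, ?_, ?_⟩ <;>
      · norm_cast <;> omega
  · refine ⟨((k / n : ℝ) : AddCircle (1 : ℝ)), ?_, ?_⟩
    · refine (coe_div_mem_hardinArc_iff hn _).mpr ⟨0, ?_, ?_⟩ <;> · norm_cast <;> omega
    · refine (coe_div_mem_hardinArc_iff hn _).mpr ⟨1, ?_, ?_⟩ <;> · norm_cast; omega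

lemma card_filter_mem_hardinArc_le (n m : ℕ) (q : AddCircle (1 : ℝ)) :
    #{k ∈ range n | q ∈ hardinArc n m k} ≤ m + 1 := by
  rcases Nat.eq_zero_or_pos n with rfl | hn
  · simp
  have hn' : (n : ℝ) ≠ 0 := by positivity
  obtain ⟨x, rfl⟩ := QuotientAddGroup.mk_surjective q
  set y : ℝ := n * x
  have hx : x = y / n := (mul_div_cancel_left₀ x hn').symm
  have hsub : {k ∈ range n | (x : AddCircle (1 : ℝ)) ∈ hardinArc n m k} ⊆
      (Icc ⌈y - m⌉ ⌊y⌋).image fun z : ℤ => (z % n).toNat := by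
    intro k hk
    obtain ⟨hkn, hkx⟩ := mem_filter.mp hk
    rw [hx, coe_div_mem_hardinArc_iff hn] at hkx
    obtain ⟨j, hj1, hj2⟩ := hkx
    refine mem_image.mpr ⟨k - n * j, mem_Icc.mpr ⟨Int.ceil_le.mpr ?_, Int.le_floor.mpr ?_⟩, ?_⟩
    · push_cast; linarith
    · push_cast; linarith
    · have hkn : (k : ℤ) < n := by exact_mod_cast mem_range.mp hkn
      rw [Int.sub_mul_emod_self_left, Int.emod_eq_of_lt (by positivity) hkn, Int.toNat_natCast]
  calc #{k ∈ range n | (x : AddCircle (1 : ℝ)) ∈ hardinArc n m k}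
      ≤ #(Icc ⌈y - m⌉ ⌊y⌋) := (card_le_card hsub).trans card_image_le
    _ ≤ m + 1 := by
      rw [Int.card_Icc]
      have h1 : y - m ≤ ⌈y - m⌉ := Int.le_ceil _
      have h2 : (⌊y⌋ : ℝ) ≤ y := Int.floor_le _
      have : ⌊y⌋ ≤ ⌈y - m⌉ + m := by exact_mod_cast (by linarith : (⌊y⌋ : ℝ) ≤ ⌈y - m⌉ + m)
      omega

def stratifiedHardin (n m i : ℕ) : Set (ℝ × AddCircle (1 : ℝ)) :=
  Set.Icc ((i / n : ℕ) : ℝ) (i / n : ℕ) ×ˢ hardinArc n m (i % n)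

lemma mem_stratifiedHardin {n m i : ℕ} {z : ℝ × AddCircle (1 : ℝ)} :
    z ∈ stratifiedHardin n m i ↔ z.1 = (i / n : ℕ) ∧ z.2 ∈ hardinArc n m (i % n) := by
  rw [stratifiedHardin, Set.Icc_self, Set.mem_prod, Set.mem_singleton_iff]

lemma stratifiedHardin_inter_nonempty {n m i j : ℕ} (hn : 0 < n) (hnm : n ≤ 2 * m + 1)
    (hij : i / n = j / n) : (stratifiedHardin n m i ∩ stratifiedHardin n m j).Nonempty := by
  obtain ⟨q, hqi, hqj⟩ := hardinArc_inter_nonempty hnm (Nat.mod_lt i hn) (Nat.mod_lt j hn)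
  exact ⟨((i / n : ℕ), q), mem_stratifiedHardin.mpr ⟨rfl, hqi⟩,
    mem_stratifiedHardin.mpr ⟨by rw [hij], hqj⟩⟩

lemma exists_ne_inter_stratifiedHardin_nonempty {n m r N : ℕ} (hnm : n ≤ 2 * m + 1)
    (hN : N ≤ r * n) (T : Finset (Fin N)) (hT : r < #T) :
    ∃ i ∈ T, ∃ j ∈ T, i ≠ j ∧
      (stratifiedHardin n m i ∩ stratifiedHardin n m j).Nonempty := by
  have hTN : #T ≤ N := card_le_univ T |>.trans_eq (Fintype.card_fin N)
  have hn : 0 < n := Nat.pos_of_ne_zero fun h => by simp [h] at hN; omega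
  have hstrata (i : Fin N) (_ : i ∈ T) : (i : ℕ) / n ∈ range r :=
    mem_range.mpr <| (Nat.div_lt_iff_lt_mul hn).mpr (i.isLt.trans_le hN)
  obtain ⟨i, hi, j, hj, hne, hij⟩ :=
    exists_ne_map_eq_of_card_lt_of_maps_to (by rwa [card_range]) hstrata
  exact ⟨i, hi, j, hj, hne, stratifiedHardin_inter_nonempty hn hnm hij⟩

lemma card_filter_mem_stratifiedHardin_le {n m N : ℕ} (hn : 0 < n) (z : ℝ × AddCircle (1 : ℝ)) :
    #{i : Fin N | z ∈ stratifiedHardin n m i} ≤ m + 1 := by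
  refine le_trans (card_le_card_of_injOn (fun i : Fin N => (i : ℕ) % n) ?_ ?_)
    (card_filter_mem_hardinArc_le n m z.2)
  · intro i hi
    exact mem_filter.mpr ⟨mem_range.mpr (Nat.mod_lt _ hn),
      (mem_stratifiedHardin.mp (mem_filter.mp hi).2).2⟩
  · intro i hi j hj (hmod : (i : ℕ) % n = j % n)
    obtain ⟨hzi, -⟩ := mem_stratifiedHardin.mp (mem_filter.mp hi).2
    obtain ⟨hzj, -⟩ := mem_stratifiedHardin.mp (mem_filter.mp hj).2
    have hdiv : (i : ℕ) / n = j / n := by exact_mod_cast hzi.symm.trans hzj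
    exact Fin.ext <| by rw [← Nat.div_add_mod i n, ← Nat.div_add_mod j n, hdiv, hmod]

/-- A stratified cylindrical society: 20 approval sets on the cylinder (each a product of
a closed interval with a closed arc) forming a (2,5)-agreeable society with agreement
number at most 3. -/
theorem stratified_cylindrical_example :
    ∃ C : Fin 20 → Set (ℝ × AddCircle (1 : ℝ)),
      (∀ i : Fin 20, ∃ a b c d : ℝ, C i = Set.Icc a b ×ˢ Arc c d) ∧
      (∀ T : Finset (Fin 20), T.card = 5 →
        ∃ i ∈ T, ∃ j ∈ T, i ≠ j ∧ (C i ∩ C j).Nonempty) ∧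
      (∀ z : ℝ × AddCircle (1 : ℝ),
        (Finset.univ.filter fun i : Fin 20 => z ∈ C i).card ≤ 3) := by
  refine ⟨fun i => stratifiedHardin 5 2 i, fun i => ⟨_, _, _, _, rfl⟩, fun T hT => ?_,
    fun z => card_filter_mem_stratifiedHardin_le (by norm_num) z⟩
  exact exists_ne_inter_stratifiedHardin_nonempty (r := 4) (by norm_num) (by norm_num) T
    (by omega)
end
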